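/- arXiv:1809.06294 — 6 statements merged into one kernel-verified Lean document; each statement's English description precedes it below -/
import Mathlib

section
/- Let K ∈ End*_𝒜(H), let {Λᵢ ∈ End*_𝒜(H,Hᵢ)}_{i∈I} be a family of adjointable operators such that ∑_{i∈I}⟨Λᵢf, Λᵢf⟩ converges in norm for every f ∈ H, and let A, B be nonzero elements of the center Z(𝒜) such that ‖A⟨K*f, K*f⟩A*‖ ≤ ‖∑_{i∈I}⟨Λᵢf, Λᵢf⟩‖ ≤ ‖B⟨f, f⟩B*‖ for all f ∈ H. If the closure of the range of the analysis operator T : H → ⊕_{i∈I}Hᵢ, Tf = (Λᵢf)_{i∈I}, is orthogonally complemented in ⊕_{i∈I}Hᵢ, then there exist constants λ, μ > 0 such that λ·A⟨K*f, K*f⟩A* ≤ ∑_{i∈I}⟨Λᵢf, Λᵢf⟩ ≤ μ·B⟨f, f⟩B* for all f ∈ H; that is, {Λᵢ} is a ∗-K-g-frame with bounds √λ·A and √μ·B. -/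
open scoped RightActions

/-- The class `CStarModule` as it stood in Mathlib of December 2024 (right `A`-action). -/
class CStarModuleOld (A : outParam <| Type*) (E : Type*) [NonUnitalSemiring A] [StarRing A]
    [Module ℂ A] [AddCommGroup E] [Module ℂ E] [PartialOrder A] [SMul Aᵐᵒᵖ E] [Norm A] [Norm E]
    extends Inner A E where
  inner_add_right {x} {y} {z} : inner x (y + z) = inner x y + inner x z
  inner_self_nonneg {x} : 0 ≤ inner x x
  inner_self {x} : inner x x = 0 ↔ x = 0
  inner_op_smul_right {a : A} {x y : E} : inner x (y <• a) = inner x y * a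
  inner_smul_right_complex {z : ℂ} {x} {y} : inner x (z • y) = z • inner x y
  star_inner x y : star (inner x y) = inner y x
  norm_eq_sqrt_norm_inner_self x : ‖x‖ = √‖inner x x‖

/-- Membership in the Hilbert `𝓐`-module direct sum `⊕ᵢ Hᵢ` (modelled inside `Π i, Hᵢ`):
the pointwise inner products `⟪x i, x i⟫` form a norm-convergent series. -/
def MemDS (𝓐 : Type*) {I : Type*} {Hi : I → Type*} [AddCommMonoid 𝓐] [TopologicalSpace 𝓐]
    [∀ i, Inner 𝓐 (Hi i)] (x : ∀ i, Hi i) : Prop :=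
  Summable fun i => (inner 𝓐 (x i) (x i) : 𝓐)

/-- The norm of an element of the direct sum `⊕ᵢ Hᵢ`. -/
noncomputable def dsNorm (𝓐 : Type*) {I : Type*} {Hi : I → Type*} [AddCommMonoid 𝓐]
    [TopologicalSpace 𝓐] [Norm 𝓐] [∀ i, Inner 𝓐 (Hi i)] (x : ∀ i, Hi i) : ℝ :=
  Real.sqrt ‖∑' i, (inner 𝓐 (x i) (x i) : 𝓐)‖

/-- `x` lies in the closure, inside the direct sum `⊕ᵢ Hᵢ`, of the range of the analysis
operator `f ↦ (Λ i f)ᵢ`. -/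
def InClosureRange (𝓐 : Type*) {I H : Type*} {Hi : I → Type*} [AddCommMonoid 𝓐]
    [TopologicalSpace 𝓐] [Norm 𝓐] [∀ i, Inner 𝓐 (Hi i)] [∀ i, AddCommGroup (Hi i)]
    (Λ : ∀ i, H → Hi i) (x : ∀ i, Hi i) : Prop :=
  MemDS 𝓐 x ∧ ∀ ε : ℝ, 0 < ε → ∃ f : H,
    MemDS 𝓐 (fun i => x i - Λ i f) ∧ dsNorm 𝓐 (fun i => x i - Λ i f) < ε

/-!
Conjugating `f` by an arbitrary `c ∈ 𝓐` (i.e. replacing `f` by `f • c`) turns each of the three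
quantities `a⟪K*f, K*f⟫a*`, `∑ᵢ ⟪Λᵢf, Λᵢf⟫` and `b⟪f, f⟫b*` into `c* (·) c`: adjointable maps are
`𝓐`-linear and `a`, `b` are central. So the norm inequalities hold between `c* p c` and `c* s c`
for every `c`, and in a C⋆-algebra this forces `p ≤ s` for positive `p`, `s`: for `s` invertible
take `c = s^(-1/2)`, otherwise approximate `s` by `s + ε`. Hence the order inequalities hold
already with `λ = μ = 1`.
-/

lemma Summable.tsum_mul_mul {ι R : Type*} [NonUnitalNonAssocSemiring R] [TopologicalSpace R]
    [IsTopologicalSemiring R] [T2Space R] {s : ι → R} (hs : Summable s) (x y : R) :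
    ∑' i, x * s i * y = x * (∑' i, s i) * y := by
  rw [(hs.mul_left x).tsum_mul_right, hs.tsum_mul_left]

namespace CStarModuleOld

variable {A : Type*} [NonUnitalRing A] [StarRing A] [Module ℂ A] [PartialOrder A] [Norm A]
  {E F : Type*} [AddCommGroup E] [Module ℂ E] [SMul Aᵐᵒᵖ E] [Norm E] [CStarModuleOld A E]
  [AddCommGroup F] [Module ℂ F] [SMul Aᵐᵒᵖ F] [Norm F] [CStarModuleOld A F]

lemma inner_sub_right (x y z : E) : (inner A x (y - z) : A) = inner A x y - inner A x z := by
  rw [eq_sub_iff_add_eq, ← inner_add_right, sub_add_cancel]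

lemma inner_op_smul_left (c : A) (x y : E) : (inner A (x <• c) y : A) = star c * inner A x y := by
  rw [← star_inner y, inner_op_smul_right, star_mul, star_inner]

lemma inner_op_smul_op_smul (c : A) (x : E) :
    (inner A (x <• c) (x <• c) : A) = star c * inner A x x * c := by
  rw [inner_op_smul_left, inner_op_smul_right, mul_assoc]

lemma ext_inner_right {u v : E} (h : ∀ x : E, (inner A x u : A) = inner A x v) : u = v := by
  rw [← sub_eq_zero, ← inner_self (A := A), inner_sub_right, h, sub_self]

lemma inner_map_eq_symm {T : E → F} {T' : F → E}
    (h : ∀ x y, (inner A (T x) y : A) = inner A x (T' y)) (y : F) (x : E) :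
    (inner A (T' y) x : A) = inner A y (T x) := by
  rw [← star_inner x, ← h, star_inner]

lemma map_op_smul_of_inner_map_eq {T : E → F} {T' : F → E}
    (h : ∀ x y, (inner A (T x) y : A) = inner A x (T' y)) (c : A) (y : F) :
    T' (y <• c) = T' y <• c :=
  ext_inner_right fun x => by rw [← h, inner_op_smul_right, h, inner_op_smul_right]

lemma tsum_inner_map_op_smul [TopologicalSpace A] [IsTopologicalRing A] [T2Space A]
    {ι : Type*} {Hi : ι → Type*} [∀ i, AddCommGroup (Hi i)] [∀ i, Module ℂ (Hi i)]
    [∀ i, SMul Aᵐᵒᵖ (Hi i)] [∀ i, Norm (Hi i)] [∀ i, CStarModuleOld A (Hi i)]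
    {Λ : ∀ i, E → Hi i} {Λadj : ∀ i, Hi i → E}
    (hΛ : ∀ i x y, (inner A (Λ i x) y : A) = inner A x (Λadj i y)) {f : E}
    (hf : Summable fun i => (inner A (Λ i f) (Λ i f) : A)) (c : A) :
    ∑' i, (inner A (Λ i (f <• c)) (Λ i (f <• c)) : A)
      = star c * (∑' i, (inner A (Λ i f) (Λ i f) : A)) * c := by
  simp only [map_op_smul_of_inner_map_eq (inner_map_eq_symm (hΛ _)), inner_op_smul_op_smul]
  exact hf.tsum_mul_mul _ _

end CStarModuleOld

lemma mul_star_mul_mul_mul_star_of_mem_center {R : Type*} [Semiring R] [StarRing R] {z : R}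
    (hz : z ∈ Set.center R) (c q : R) :
    z * (star c * q * c) * star z = star c * (z * q * star z) * c := by
  have hzc : z * star c = star c * z := (Set.mem_center_iff.mp hz).comm (star c)
  have hcz : c * star z = star z * c :=
    ((Set.mem_center_iff.mp (Set.star_mem_center hz)).comm c).symm
  calc z * (star c * q * c) * star z = z * star c * q * (c * star z) := by simp only [mul_assoc]
    _ = star c * (z * q * star z) * c := by rw [hzc, hcz]; simp only [mul_assoc]

section PositiveOrder

variable {𝓐 : Type*} [CStarAlgebra 𝓐] [PartialOrder 𝓐] [StarOrderedRing 𝓐]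

lemma le_of_forall_norm_star_mul_mul_le_of_isStrictlyPositive {p t : 𝓐} (hp : 0 ≤ p)
    (ht : IsStrictlyPositive t) (h : ∀ c : 𝓐, ‖star c * p * c‖ ≤ ‖star c * t * c‖) : p ≤ t := by
  nontriviality 𝓐
  set c : 𝓐 := t ^ (-(1 / 2) : ℝ)
  have hc : IsSelfAdjoint c := .of_nonneg CFC.rpow_nonneg
  have hsqrt : IsSelfAdjoint (CFC.sqrt p) := .of_nonneg (CFC.sqrt_nonneg p)
  rw [le_iff_norm_sqrt_mul_rpow p t, ← sq_le_one_iff₀ (norm_nonneg _), sq,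
    ← CStarRing.norm_star_mul_self, star_mul, hsqrt.star_eq, ← mul_assoc,
    mul_assoc _ _ (CFC.sqrt p), CFC.sqrt_mul_sqrt_self p hp]
  calc ‖star c * p * c‖ ≤ ‖star c * t * c‖ := h c
    _ = 1 := by rw [hc.star_eq, CFC.conjugate_rpow_neg_one_half t, norm_one]

lemma le_of_forall_norm_star_mul_mul_le {p s : 𝓐} (hp : 0 ≤ p) (hs : 0 ≤ s)
    (h : ∀ c : 𝓐, ‖star c * p * c‖ ≤ ‖star c * s * c‖) : p ≤ s := by
  have hlim : Filter.Tendsto (fun ε : ℝ => s + algebraMap ℝ 𝓐 ε) (nhdsWithin 0 (Set.Ioi 0))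
      (nhds s) := by
    refine (Continuous.tendsto' ?_ 0 s ?_).mono_left nhdsWithin_le_nhds
    · fun_prop
    · simp
  refine ge_of_tendsto hlim ?_
  filter_upwards [self_mem_nhdsWithin] with ε (hε : 0 < ε)
  have hε' : IsStrictlyPositive (algebraMap ℝ 𝓐 ε) := isStrictlyPositive_algebraMap hε
  refine le_of_forall_norm_star_mul_mul_le_of_isStrictlyPositive hp (hε'.nonneg_add hs)
    fun c => (h c).trans ?_
  exact CStarAlgebra.norm_le_norm_of_nonneg_of_le (star_left_conjugate_nonneg hs c)
    (star_left_conjugate_le_conjugate (le_add_of_nonneg_right hε'.nonneg) c)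

end PositiveOrder

theorem star_K_g_frame_of_norm_ineq_of_orthogonally_complemented_general
    {𝓐 : Type*} [CStarAlgebra 𝓐] [PartialOrder 𝓐] [StarOrderedRing 𝓐]
    {I : Type*}
    {H : Type*} [NormedAddCommGroup H] [NormedSpace ℂ H] [SMul 𝓐ᵐᵒᵖ H]
    [CStarModuleOld 𝓐 H]
    {Hi : I → Type*} [∀ i, NormedAddCommGroup (Hi i)] [∀ i, NormedSpace ℂ (Hi i)]
    [∀ i, SMul 𝓐ᵐᵒᵖ (Hi i)] [∀ i, CStarModuleOld 𝓐 (Hi i)]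
    -- `K` is an adjointable operator on `H` with adjoint `Kadj`
    (K Kadj : H →L[ℂ] H)
    (hK : ∀ x y : H, (inner 𝓐 (K x) y : 𝓐) = inner 𝓐 x (Kadj y))
    -- the family `Λ i ∈ End*(H, Hi i)` of adjointable operators
    (Λ : ∀ i, H →L[ℂ] Hi i) (Λadj : ∀ i, Hi i →L[ℂ] H)
    (hΛ : ∀ i (x : H) (y : Hi i), (inner 𝓐 (Λ i x) y : 𝓐) = inner 𝓐 x (Λadj i y))
    (hsum : ∀ x : H, Summable fun i => (inner 𝓐 (Λ i x) (Λ i x) : 𝓐))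
    -- `a`, `b` are nonzero elements of the center of `𝓐`
    (a b : 𝓐)
    (hac : a ∈ Set.center 𝓐) (hbc : b ∈ Set.center 𝓐)
    -- the norm inequalities
    (hnorm : ∀ f : H,
      ‖a * (inner 𝓐 (Kadj f) (Kadj f) : 𝓐) * star a‖ ≤ ‖∑' i, (inner 𝓐 (Λ i f) (Λ i f) : 𝓐)‖ ∧
      ‖∑' i, (inner 𝓐 (Λ i f) (Λ i f) : 𝓐)‖ ≤ ‖b * (inner 𝓐 f f : 𝓐) * star b‖) :
    ∃ lam mu : ℝ, 0 < lam ∧ 0 < mu ∧ ∀ f : H,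
      lam • (a * (inner 𝓐 (Kadj f) (Kadj f) : 𝓐) * star a) ≤
          ∑' i, (inner 𝓐 (Λ i f) (Λ i f) : 𝓐) ∧
      ∑' i, (inner 𝓐 (Λ i f) (Λ i f) : 𝓐) ≤ mu • (b * (inner 𝓐 f f : 𝓐) * star b) := by
  refine ⟨1, 1, one_pos, one_pos, fun f => ?_⟩
  rw [one_smul, one_smul]
  have hS := CStarModuleOld.tsum_inner_map_op_smul (Λ := fun i => ⇑(Λ i)) hΛ (hsum f)
  constructor
  · refine le_of_forall_norm_star_mul_mul_le
      (star_right_conjugate_nonneg CStarModuleOld.inner_self_nonneg a)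
      (tsum_nonneg fun i => CStarModuleOld.inner_self_nonneg) fun c => ?_
    have hlow := (hnorm (f <• c)).1
    rwa [CStarModuleOld.map_op_smul_of_inner_map_eq hK, CStarModuleOld.inner_op_smul_op_smul,
      hS, mul_star_mul_mul_mul_star_of_mem_center hac] at hlow
  · refine le_of_forall_norm_star_mul_mul_le
      (tsum_nonneg fun i => CStarModuleOld.inner_self_nonneg)
      (star_right_conjugate_nonneg CStarModuleOld.inner_self_nonneg b) fun c => ?_
    have hupp := (hnorm (f <• c)).2
    rwa [CStarModuleOld.inner_op_smul_op_smul, hS,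
      mul_star_mul_mul_mul_star_of_mem_center hbc] at hupp

/-- If the analysis operator `T` of the family `{Λ i}` has its range closure
orthogonally complemented in `⊕ᵢ Hᵢ`, and the norm inequalities
`‖A⟪K*f,K*f⟫A*‖ ≤ ‖∑ᵢ ⟪Λᵢf,Λᵢf⟫‖ ≤ ‖B⟪f,f⟫B*‖` hold with `A, B` nonzero central elements,
then `{Λ i}` is a `∗`-`K`-`g`-frame (with bounds `√λ·A`, `√μ·B`). -/
theorem star_K_g_frame_of_norm_ineq_of_orthogonally_complemented
    {𝓐 : Type*} [CStarAlgebra 𝓐] [PartialOrder 𝓐] [StarOrderedRing 𝓐]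
    {I : Type*} [Countable I]
    {H : Type*} [NormedAddCommGroup H] [NormedSpace ℂ H] [SMul 𝓐ᵐᵒᵖ H]
    [CStarModuleOld 𝓐 H] [CompleteSpace H]
    {Hi : I → Type*} [∀ i, NormedAddCommGroup (Hi i)] [∀ i, NormedSpace ℂ (Hi i)]
    [∀ i, SMul 𝓐ᵐᵒᵖ (Hi i)] [∀ i, CStarModuleOld 𝓐 (Hi i)] [∀ i, CompleteSpace (Hi i)]
    -- `K` is an adjointable operator on `H` with adjoint `Kadj`
    (K Kadj : H →L[ℂ] H)
    (hK : ∀ x y : H, (inner 𝓐 (K x) y : 𝓐) = inner 𝓐 x (Kadj y))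
    -- the family `Λ i ∈ End*(H, Hi i)` of adjointable operators
    (Λ : ∀ i, H →L[ℂ] Hi i) (Λadj : ∀ i, Hi i →L[ℂ] H)
    (hΛ : ∀ i (x : H) (y : Hi i), (inner 𝓐 (Λ i x) y : 𝓐) = inner 𝓐 x (Λadj i y))
    (hsum : ∀ x : H, Summable fun i => (inner 𝓐 (Λ i x) (Λ i x) : 𝓐))
    -- `a`, `b` are nonzero elements of the center of `𝓐`
    (a b : 𝓐) (ha : a ≠ 0) (hb : b ≠ 0)
    (hac : a ∈ Set.center 𝓐) (hbc : b ∈ Set.center 𝓐)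
    -- the norm inequalities
    (hnorm : ∀ f : H,
      ‖a * (inner 𝓐 (Kadj f) (Kadj f) : 𝓐) * star a‖ ≤ ‖∑' i, (inner 𝓐 (Λ i f) (Λ i f) : 𝓐)‖ ∧
      ‖∑' i, (inner 𝓐 (Λ i f) (Λ i f) : 𝓐)‖ ≤ ‖b * (inner 𝓐 f f : 𝓐) * star b‖)
    -- the closure of the range of the analysis operator is orthogonally complemented
    (hcomp : ∀ x : ∀ i, Hi i, MemDS 𝓐 x →
      ∃ y z : ∀ i, Hi i, InClosureRange 𝓐 (fun i => ⇑(Λ i)) y ∧ MemDS 𝓐 z ∧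
        (∀ w : ∀ i, Hi i, InClosureRange 𝓐 (fun i => ⇑(Λ i)) w →
          Summable (fun i => (inner 𝓐 (w i) (z i) : 𝓐)) ∧
            ∑' i, (inner 𝓐 (w i) (z i) : 𝓐) = 0) ∧
        x = y + z) :
    ∃ lam mu : ℝ, 0 < lam ∧ 0 < mu ∧ ∀ f : H,
      lam • (a * (inner 𝓐 (Kadj f) (Kadj f) : 𝓐) * star a) ≤
          ∑' i, (inner 𝓐 (Λ i f) (Λ i f) : 𝓐) ∧
      ∑' i, (inner 𝓐 (Λ i f) (Λ i f) : 𝓐) ≤ mu • (b * (inner 𝓐 f f : 𝓐) * star b) :=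
  star_K_g_frame_of_norm_ineq_of_orthogonally_complemented_general K Kadj hK Λ Λadj hΛ hsum a b hac
    hbc hnorm
end

section
/- Let K ∈ End*_𝒜(H), let {Λᵢ ∈ End*_𝒜(H,Hᵢ)}_{i∈I} be a family of adjointable operators such that ∑_{i∈I}⟨Λᵢf, Λᵢf⟩ converges in norm for every f ∈ H, and let A, B be nonzero elements of the center Z(𝒜) such that ‖A⟨K*f, K*f⟩A*‖ ≤ ‖∑_{i∈I}⟨Λᵢf, Λᵢf⟩‖ ≤ ‖B⟨f, f⟩B*‖ for all f ∈ H. If the analysis operator T : H → ⊕_{i∈I}Hᵢ, Tf = (Λᵢf)_{i∈I}, has closed range, then there exist constants λ, μ > 0 such that λ·A⟨K*f, K*f⟩A* ≤ ∑_{i∈I}⟨Λᵢf, Λᵢf⟩ ≤ μ·B⟨f, f⟩B* for all f ∈ H; that is, {Λᵢ} is a ∗-K-g-frame. -/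
/-!
The three maps `f ↦ a⟪K* f, K* f⟫a*`, `f ↦ ∑ᵢ ⟪Λᵢ f, Λᵢ f⟫` and `f ↦ b⟪f, f⟫b*` all transform as
`Φ (f <• c) = c* Φ f c` under the right `𝓐`-action, because adjointable maps are automatically
`𝓐`-linear and `a`, `b` are central. Applying the norm inequalities at `f <• c` therefore bounds
`‖c* x c‖ ≤ ‖c* y c‖` for every `c`, and in a C⋆-algebra this forces `x ≤ y` for positive `x`, `y`:
with `c = (y + ε)^(-1/2)` one gets `‖c x c‖ ≤ 1`, i.e. `x ≤ y + ε`. So `λ = μ = 1` work.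
-/

open scoped RightActions

/-- The December 2024 Mathlib `CStarModule` (right `𝓐ᵐᵒᵖ`-action, `⟪x, y <• a⟫ = ⟪x, y⟫ * a`),
whose meaning has since changed in Mathlib. -/
class CStarModule' (A : outParam <| Type*) (E : Type*) [NonUnitalSemiring A] [StarRing A]
    [Module ℂ A] [AddCommGroup E] [Module ℂ E] [PartialOrder A] [SMul Aᵐᵒᵖ E] [Norm A] [Norm E]
    extends Inner A E where
  inner_add_right {x} {y} {z} : inner x (y + z) = inner x y + inner x z
  inner_self_nonneg {x} : 0 ≤ inner x x
  inner_self {x} : inner x x = 0 ↔ x = 0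
  inner_op_smul_right {a : A} {x y : E} : inner x (y <• a) = inner x y * a
  inner_smul_right_complex {z : ℂ} {x} {y} : inner x (z • y) = z • inner x y
  star_inner x y : star (inner x y) = inner y x
  norm_eq_sqrt_norm_inner_self x : ‖x‖ = √‖inner x x‖

section CStarAlgebra

variable {A : Type*} [CStarAlgebra A] [PartialOrder A] [StarOrderedRing A]

lemma le_iff_norm_rpow_conjugate_le_one {x z : A} (hx : 0 ≤ x) (hz : IsStrictlyPositive z) :
    x ≤ z ↔ ‖z ^ (-(1 / 2) : ℝ) * x * z ^ (-(1 / 2) : ℝ)‖ ≤ 1 := by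
  rw [le_iff_norm_sqrt_mul_rpow x z, ← sq_le_one_iff₀ (norm_nonneg _), sq,
    ← CStarRing.norm_star_mul_self, star_mul, IsSelfAdjoint.of_nonneg (CFC.sqrt_nonneg x),
    IsSelfAdjoint.of_nonneg CFC.rpow_nonneg, ← mul_assoc, mul_assoc _ _ (CFC.sqrt x),
    CFC.sqrt_mul_sqrt_self x]

lemma le_of_forall_norm_star_conjugate_le {x y : A} (hx : 0 ≤ x) (hy : 0 ≤ y)
    (h : ∀ c : A, ‖star c * x * c‖ ≤ ‖star c * y * c‖) : x ≤ y := by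
  have hle : ∀ ε : ℝ, 0 < ε → x ≤ algebraMap ℝ A ε + y := by
    intro ε hε
    set z := algebraMap ℝ A ε + y
    have hz : IsStrictlyPositive z := (isStrictlyPositive_algebraMap hε).add_nonneg hy
    set c := z ^ (-(1 / 2) : ℝ)
    have hc : star c = c := IsSelfAdjoint.of_nonneg CFC.rpow_nonneg
    have hyz : y ≤ z := le_add_of_nonneg_left (isStrictlyPositive_algebraMap hε).nonneg
    have hcyc : c * y * c ≤ 1 :=
      calc c * y * c ≤ c * z * c := by
            simpa only [hc] using star_left_conjugate_le_conjugate hyz c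
        _ = 1 := CFC.conjugate_rpow_neg_one_half z hz
    rw [le_iff_norm_rpow_conjugate_le_one hx hz]
    calc ‖c * x * c‖ ≤ ‖c * y * c‖ := by simpa only [hc] using h c
      _ ≤ 1 := (CStarAlgebra.norm_le_one_iff_of_nonneg _
          (by simpa only [hc] using star_left_conjugate_nonneg hy c)).mpr hcyc
  have hlim : Filter.Tendsto (fun ε : ℝ => algebraMap ℝ A ε + y) (nhdsWithin 0 (Set.Ioi 0))
      (nhds y) :=
    (((continuous_algebraMap ℝ A).add continuous_const).tendsto' 0 y (by simp)).mono_left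
      nhdsWithin_le_nhds
  exact ge_of_tendsto hlim (eventually_nhdsWithin_of_forall hle)

end CStarAlgebra

namespace CStarModule'

variable {A : Type*} [NonUnitalRing A] [StarRing A] [Module ℂ A] [PartialOrder A] [Norm A]
  {E : Type*} [AddCommGroup E] [Module ℂ E] [Norm E] [SMul Aᵐᵒᵖ E] [CStarModule' A E]

lemma inner_op_smul_left {a : A} {x y : E} : inner A (x <• a) y = star a * inner A x y := by
  rw [← star_inner y, inner_op_smul_right, star_mul, star_inner]

lemma inner_op_smul_self (x : E) (c : A) :
    inner A (x <• c) (x <• c) = star c * inner A x x * c := by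
  rw [inner_op_smul_right, inner_op_smul_left]

lemma inner_sub_right {x y z : E} : inner A x (y - z) = inner A x y - inner A x z := by
  rw [eq_sub_iff_add_eq, ← inner_add_right, sub_add_cancel]

lemma inner_sub_left {x y z : E} : inner A (x - y) z = inner A x z - inner A y z := by
  rw [← star_inner z, inner_sub_right, star_sub, star_inner, star_inner]

variable {F : Type*} [AddCommGroup F] [Module ℂ F] [Norm F] [SMul Aᵐᵒᵖ F] [CStarModule' A F]

lemma inner_adjoint_symm {T : E → F} {S : F → E}
    (h : ∀ x y, inner A (T x) y = inner A x (S y)) (y : F) (x : E) :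
    inner A (S y) x = inner A y (T x) := by
  rw [← star_inner x, ← h, star_inner]

/-- Adjointable maps are automatically `A`-linear: the defect `T (x <• c) - T x <• c` has
inner product zero with itself. -/
lemma map_op_smul_of_adjoint {T : E → F} {S : F → E}
    (h : ∀ x y, inner A (T x) y = inner A x (S y)) (x : E) (c : A) :
    T (x <• c) = T x <• c := by
  have hdefect : inner A (T (x <• c) - T x <• c) (T (x <• c) - T x <• c) = 0 := by
    rw [inner_sub_left, h, inner_op_smul_left, inner_op_smul_left, h, sub_self]
  exact sub_eq_zero.mp (inner_self.mp hdefect)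

end CStarModule'

def ConjEquivariant {A E : Type*} [Mul A] [Star A] [SMul Aᵐᵒᵖ E] (Φ : E → A) : Prop :=
  ∀ x c, Φ (x <• c) = star c * Φ x * c

namespace ConjEquivariant

open CStarModule'

section Module

variable {A : Type*} [NonUnitalRing A] [StarRing A] [Module ℂ A] [PartialOrder A] [Norm A]
  {E : Type*} [AddCommGroup E] [Module ℂ E] [Norm E] [SMul Aᵐᵒᵖ E] [CStarModule' A E]

lemma inner_self : ConjEquivariant fun x : E => inner A x x :=
  inner_op_smul_self

lemma comp_of_adjoint {F : Type*} [AddCommGroup F] [Module ℂ F] [Norm F] [SMul Aᵐᵒᵖ F]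
    [CStarModule' A F] {Φ : F → A} (hΦ : ConjEquivariant Φ) {T : E → F} {S : F → E}
    (h : ∀ x y, inner A (T x) y = inner A x (S y)) : ConjEquivariant fun x => Φ (T x) :=
  fun x c => by beta_reduce; rw [map_op_smul_of_adjoint h, hΦ]

end Module

section Semiring

variable {A E : Type*} [Semiring A] [StarRing A] [SMul Aᵐᵒᵖ E]

lemma conj_of_mem_center {Φ : E → A} (hΦ : ConjEquivariant Φ) {a : A} (ha : a ∈ Set.center A) :
    ConjEquivariant fun x => a * Φ x * star a := fun x c => by
  have hac : a * star c = star c * a := (Set.mem_center_iff.mp ha).comm (star c)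
  have hca : c * star a = star a * c :=
    ((Set.mem_center_iff.mp (Set.star_mem_center ha)).comm c).symm
  beta_reduce
  rw [hΦ]
  calc a * (star c * Φ x * c) * star a = (a * star c) * Φ x * (c * star a) := by
        simp only [mul_assoc]
    _ = star c * (a * Φ x * star a) * c := by rw [hac, hca]; simp only [mul_assoc]

lemma tsum [TopologicalSpace A] [IsTopologicalSemiring A] [T2Space A] {ι : Type*}
    {Φ : ι → E → A} (hΦ : ∀ i, ConjEquivariant (Φ i)) (hs : ∀ x, Summable fun i => Φ i x) :
    ConjEquivariant fun x => ∑' i, Φ i x := fun x c => by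
  simp only [hΦ _ x c]
  rw [← (hs x).tsum_mul_left, ← ((hs x).mul_left _).tsum_mul_right]

end Semiring

lemma le_of_norm_le {A E : Type*} [CStarAlgebra A] [PartialOrder A] [StarOrderedRing A]
    [SMul Aᵐᵒᵖ E] {Φ Ψ : E → A} (hΦ : ConjEquivariant Φ) (hΨ : ConjEquivariant Ψ) {x : E}
    (hΦx : 0 ≤ Φ x) (hΨx : 0 ≤ Ψ x) (h : ∀ y, ‖Φ y‖ ≤ ‖Ψ y‖) : Φ x ≤ Ψ x :=
  le_of_forall_norm_star_conjugate_le hΦx hΨx fun c => by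
    simpa only [hΦ x c, hΨ x c] using h (x <• c)

end ConjEquivariant

theorem star_K_g_frame_of_norm_ineq_of_closed_range_general
    {𝓐 : Type*} [CStarAlgebra 𝓐] [PartialOrder 𝓐] [StarOrderedRing 𝓐]
    {I : Type*}
    {H : Type*} [NormedAddCommGroup H] [NormedSpace ℂ H] [SMul 𝓐ᵐᵒᵖ H]
    [CStarModule' 𝓐 H]
    {Hi : I → Type*} [∀ i, NormedAddCommGroup (Hi i)] [∀ i, NormedSpace ℂ (Hi i)]
    [∀ i, SMul 𝓐ᵐᵒᵖ (Hi i)] [∀ i, CStarModule' 𝓐 (Hi i)]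
    -- `K` is an adjointable operator on `H` with adjoint `Kadj`
    (K Kadj : H →L[ℂ] H)
    (hK : ∀ x y : H, (inner 𝓐 (K x) y : 𝓐) = inner 𝓐 x (Kadj y))
    -- the family `Λ i ∈ End*(H, Hi i)` of adjointable operators
    (Λ : ∀ i, H →L[ℂ] Hi i) (Λadj : ∀ i, Hi i →L[ℂ] H)
    (hΛ : ∀ i (x : H) (y : Hi i), (inner 𝓐 (Λ i x) y : 𝓐) = inner 𝓐 x (Λadj i y))
    (hsum : ∀ x : H, Summable fun i => (inner 𝓐 (Λ i x) (Λ i x) : 𝓐))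
    -- `a`, `b` are nonzero elements of the center of `𝓐`
    (a b : 𝓐)
    (hac : a ∈ Set.center 𝓐) (hbc : b ∈ Set.center 𝓐)
    -- the norm inequalities
    (hnorm : ∀ f : H,
      ‖a * (inner 𝓐 (Kadj f) (Kadj f) : 𝓐) * star a‖ ≤ ‖∑' i, (inner 𝓐 (Λ i f) (Λ i f) : 𝓐)‖ ∧
      ‖∑' i, (inner 𝓐 (Λ i f) (Λ i f) : 𝓐)‖ ≤ ‖b * (inner 𝓐 f f : 𝓐) * star b‖) :
    ∃ lam mu : ℝ, 0 < lam ∧ 0 < mu ∧ ∀ f : H,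
      lam • (a * (inner 𝓐 (Kadj f) (Kadj f) : 𝓐) * star a) ≤
          ∑' i, (inner 𝓐 (Λ i f) (Λ i f) : 𝓐) ∧
      ∑' i, (inner 𝓐 (Λ i f) (Λ i f) : 𝓐) ≤ mu • (b * (inner 𝓐 f f : 𝓐) * star b) := by
  have hKa : ConjEquivariant fun f => a * (inner 𝓐 (Kadj f) (Kadj f) : 𝓐) * star a :=
    (ConjEquivariant.inner_self.comp_of_adjoint
      (CStarModule'.inner_adjoint_symm hK)).conj_of_mem_center hac
  have hS : ConjEquivariant fun f => ∑' i, (inner 𝓐 (Λ i f) (Λ i f) : 𝓐) :=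
    .tsum (fun i => ConjEquivariant.inner_self.comp_of_adjoint (hΛ i)) hsum
  have hBb : ConjEquivariant fun f => b * (inner 𝓐 f f : 𝓐) * star b :=
    (ConjEquivariant.inner_self (E := H)).conj_of_mem_center hbc
  refine ⟨1, 1, one_pos, one_pos, fun f => ?_⟩
  have hKaf : 0 ≤ a * (inner 𝓐 (Kadj f) (Kadj f) : 𝓐) * star a :=
    star_right_conjugate_nonneg CStarModule'.inner_self_nonneg a
  have hSf : 0 ≤ ∑' i, (inner 𝓐 (Λ i f) (Λ i f) : 𝓐) :=
    tsum_nonneg fun i => CStarModule'.inner_self_nonneg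
  have hBbf : 0 ≤ b * (inner 𝓐 f f : 𝓐) * star b :=
    star_right_conjugate_nonneg CStarModule'.inner_self_nonneg b
  simp only [one_smul]
  exact ⟨hKa.le_of_norm_le hS hKaf hSf fun g => (hnorm g).1,
    hS.le_of_norm_le hBb hSf hBbf fun g => (hnorm g).2⟩

/-- If the analysis operator `T` of the family `{Λ i}` has closed range in
`⊕ᵢ Hᵢ`, and the norm inequalities
`‖A⟪K*f,K*f⟫A*‖ ≤ ‖∑ᵢ ⟪Λᵢf,Λᵢf⟫‖ ≤ ‖B⟪f,f⟫B*‖` hold with `A, B` nonzero central elements,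
then `{Λ i}` is a `∗`-`K`-`g`-frame. -/
theorem star_K_g_frame_of_norm_ineq_of_closed_range
    {𝓐 : Type*} [CStarAlgebra 𝓐] [PartialOrder 𝓐] [StarOrderedRing 𝓐]
    {I : Type*} [Countable I]
    {H : Type*} [NormedAddCommGroup H] [NormedSpace ℂ H] [SMul 𝓐ᵐᵒᵖ H]
    [CStarModule' 𝓐 H] [CompleteSpace H]
    {Hi : I → Type*} [∀ i, NormedAddCommGroup (Hi i)] [∀ i, NormedSpace ℂ (Hi i)]
    [∀ i, SMul 𝓐ᵐᵒᵖ (Hi i)] [∀ i, CStarModule' 𝓐 (Hi i)] [∀ i, CompleteSpace (Hi i)]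
    -- `K` is an adjointable operator on `H` with adjoint `Kadj`
    (K Kadj : H →L[ℂ] H)
    (hK : ∀ x y : H, (inner 𝓐 (K x) y : 𝓐) = inner 𝓐 x (Kadj y))
    -- the family `Λ i ∈ End*(H, Hi i)` of adjointable operators
    (Λ : ∀ i, H →L[ℂ] Hi i) (Λadj : ∀ i, Hi i →L[ℂ] H)
    (hΛ : ∀ i (x : H) (y : Hi i), (inner 𝓐 (Λ i x) y : 𝓐) = inner 𝓐 x (Λadj i y))
    (hsum : ∀ x : H, Summable fun i => (inner 𝓐 (Λ i x) (Λ i x) : 𝓐))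
    -- `a`, `b` are nonzero elements of the center of `𝓐`
    (a b : 𝓐) (ha : a ≠ 0) (hb : b ≠ 0)
    (hac : a ∈ Set.center 𝓐) (hbc : b ∈ Set.center 𝓐)
    -- the norm inequalities
    (hnorm : ∀ f : H,
      ‖a * (inner 𝓐 (Kadj f) (Kadj f) : 𝓐) * star a‖ ≤ ‖∑' i, (inner 𝓐 (Λ i f) (Λ i f) : 𝓐)‖ ∧
      ‖∑' i, (inner 𝓐 (Λ i f) (Λ i f) : 𝓐)‖ ≤ ‖b * (inner 𝓐 f f : 𝓐) * star b‖)
    -- the analysis operator has closed range: every point of the closure of its range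
    -- is in its range
    (hclosed : ∀ x : ∀ i, Hi i, InClosureRange 𝓐 (fun i => ⇑(Λ i)) x →
      ∃ f : H, x = fun i => Λ i f) :
    ∃ lam mu : ℝ, 0 < lam ∧ 0 < mu ∧ ∀ f : H,
      lam • (a * (inner 𝓐 (Kadj f) (Kadj f) : 𝓐) * star a) ≤
          ∑' i, (inner 𝓐 (Λ i f) (Λ i f) : 𝓐) ∧
      ∑' i, (inner 𝓐 (Λ i f) (Λ i f) : 𝓐) ≤ mu • (b * (inner 𝓐 f f : 𝓐) * star b) :=
  star_K_g_frame_of_norm_ineq_of_closed_range_general K Kadj hK Λ Λadj hΛ hsum a b hac hbc hnorm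
end

section
/- Let K, L ∈ End*_𝒜(H) and let {Λᵢ}_{i∈I} be a ∗-K-g-frame for H with bounds A, B ∈ 𝒜. Then {Λᵢ ∘ L*}_{i∈I} is a ∗-(LK)-g-frame for H with bounds A and ‖L‖·B; that is, for every f ∈ H, A⟨(LK)*f, (LK)*f⟩A* ≤ ∑_{i∈I}⟨ΛᵢL*f, ΛᵢL*f⟩ ≤ ‖L‖²·B⟨f, f⟩B*. -/
/-!
The lower bound is the hypothesis at `L* f`, since `(LK)* = K* L*`. The upper bound rests on the
operator inequality `⟪T x, T x⟫ ≤ ‖T‖² ⟪x, x⟫` for `T = L*`, which is `A`-linear because it is an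
adjoint, and has norm at most `‖L‖`. To prove it, normalise `x`: with `c = ⟪x, x⟫ + ε` and
`d = c^(-1/2)`, the vector `d • x` has norm at most `1`, so `d ⟪T x, T x⟫ d = ⟪T (d • x), T (d • x)⟫`
is at most `‖T‖²`; conjugating back by `c^(1/2)` gives `⟪T x, T x⟫ ≤ ‖T‖² c`, and `ε → 0`.
-/

open scoped RightActions

open CFC Filter Topology

namespace CStarAlgebra

variable {A : Type*} [CStarAlgebra A] [PartialOrder A] [StarOrderedRing A]

theorem le_smul_of_rpow_conjugate_le {c a : A} (hc : IsStrictlyPositive c) {s : ℝ}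
    (h : c ^ (-(1 / 2) : ℝ) * a * c ^ (-(1 / 2) : ℝ) ≤ algebraMap ℝ A s) : a ≤ s • c := by
  have hinv : sqrt c * c ^ (-(1 / 2) : ℝ) = 1 ∧ c ^ (-(1 / 2) : ℝ) * sqrt c = 1 := by
    simp only [sqrt_eq_rpow, ← rpow_add hc.isUnit]
    norm_num
    exact rpow_zero c
  calc a = sqrt c * (c ^ (-(1 / 2) : ℝ) * a * c ^ (-(1 / 2) : ℝ)) * sqrt c := by
        simp only [← mul_assoc, hinv.1, one_mul]
        rw [mul_assoc, hinv.2, mul_one]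
    _ ≤ sqrt c * algebraMap ℝ A s * sqrt c :=
        IsSelfAdjoint.conjugate_le_conjugate h (IsSelfAdjoint.of_nonneg (sqrt_nonneg c))
    _ = s • c := by
        rw [Algebra.algebraMap_eq_smul_one, mul_smul_comm, mul_one, smul_mul_assoc,
          sqrt_mul_sqrt_self c hc.nonneg]

end CStarAlgebra

namespace CStarModule

variable {A : Type*} [CStarAlgebra A] [PartialOrder A]
  {E F : Type*} [NormedAddCommGroup E] [NormedSpace ℂ E] [SMul A E] [CStarModule A E]
  [NormedAddCommGroup F] [NormedSpace ℂ F] [SMul A F] [CStarModule A F]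

local notation "⟪" x ", " y "⟫" => inner A x y

theorem adjoint_map_smul {S : E → F} {T : F → E} (h : ∀ x y, ⟪S x, y⟫ = ⟪x, T y⟫)
    (a : A) (y : F) : T (a • y) = a • T y := by
  have horth : ∀ z, ⟪z, T (a • y) - a • T y⟫ = 0 := fun z => by
    simp [← h]
  simpa [sub_eq_zero] using (inner_self (A := A)).1 (horth _)

variable [StarOrderedRing A]

theorem inner_self_le_algebraMap_norm_sq (x : E) : ⟪x, x⟫ ≤ algebraMap ℝ A (‖x‖ ^ 2) := by
  rw [norm_sq_eq A]
  exact IsSelfAdjoint.le_algebraMap_norm_self (IsSelfAdjoint.of_nonneg inner_self_nonneg)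

theorem norm_le_one_of_inner_self_le_one {x : E} (hx : ⟪x, x⟫ ≤ 1) : ‖x‖ ≤ 1 := by
  rw [← sq_le_one_iff₀ (norm_nonneg x), norm_sq_eq A]
  exact (CStarAlgebra.norm_le_one_iff_of_nonneg _ (inner_self_nonneg (A := A))).2 hx

theorem inner_self_apply_le_add_smul {T : E → F} {C : ℝ}
    (hT_smul : ∀ (a : A) x, T (a • x) = a • T x) (hT : ∀ x, ‖T x‖ ≤ C * ‖x‖) (x : E)
    {ε : ℝ} (hε : 0 < ε) :
    ⟪T x, T x⟫ ≤ C ^ 2 • (⟪x, x⟫ + ε • (1 : A)) := by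
  set c := ⟪x, x⟫ + ε • (1 : A)
  have hc : IsStrictlyPositive c :=
    isStrictlyPositive_add (.inr ⟨inner_self_nonneg, .smul hε isStrictlyPositive_one⟩)
  set d := c ^ (-(1 / 2) : ℝ)
  have hd : star d = d := IsSelfAdjoint.of_nonneg rpow_nonneg
  have hdx : ‖d • x‖ ≤ 1 := by
    refine norm_le_one_of_inner_self_le_one (A := A) ?_
    calc ⟪d • x, d • x⟫ = d * ⟪x, x⟫ * d := by simp [hd, mul_assoc]
      _ ≤ d * c * d := IsSelfAdjoint.conjugate_le_conjugate
          (le_add_of_nonneg_right (smul_nonneg hε.le zero_le_one)) hd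
      _ = 1 := conjugate_rpow_neg_one_half c
  refine CStarAlgebra.le_smul_of_rpow_conjugate_le hc ?_
  calc d * ⟪T x, T x⟫ * d = ⟪T (d • x), T (d • x)⟫ := by simp [hT_smul, hd, mul_assoc]
    _ ≤ algebraMap ℝ A (‖T (d • x)‖ ^ 2) := inner_self_le_algebraMap_norm_sq _
    _ ≤ algebraMap ℝ A (C ^ 2) := by
        refine algebraMap_mono (β := A) ?_
        calc ‖T (d • x)‖ ^ 2 ≤ (C * ‖d • x‖) ^ 2 := pow_le_pow_left₀ (norm_nonneg _) (hT _) 2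
          _ = C ^ 2 * ‖d • x‖ ^ 2 := mul_pow C _ 2
          _ ≤ C ^ 2 := mul_le_of_le_one_right (sq_nonneg C) (pow_le_one₀ (norm_nonneg _) hdx)

theorem inner_self_apply_le {T : E → F} {C : ℝ}
    (hT_smul : ∀ (a : A) x, T (a • x) = a • T x) (hT : ∀ x, ‖T x‖ ≤ C * ‖x‖) (x : E) :
    ⟪T x, T x⟫ ≤ C ^ 2 • ⟪x, x⟫ := by
  have hlim : Tendsto (fun ε : ℝ => C ^ 2 • (⟪x, x⟫ + ε • (1 : A))) (𝓝[>] 0)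
      (𝓝 (C ^ 2 • ⟪x, x⟫)) := by
    have hcont : Continuous fun ε : ℝ => C ^ 2 • (⟪x, x⟫ + ε • (1 : A)) := by fun_prop
    simpa using tendsto_nhdsWithin_of_tendsto_nhds (hcont.tendsto 0)
  exact ge_of_tendsto hlim (eventually_nhdsWithin_of_forall fun ε hε =>
    inner_self_apply_le_add_smul hT_smul hT x hε)

theorem norm_adjoint_apply_le {S : E →L[ℂ] F} {T : F → E} (h : ∀ x y, ⟪S x, y⟫ = ⟪x, T y⟫)
    (y : F) : ‖T y‖ ≤ ‖S‖ * ‖y‖ := by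
  have hsq : ‖T y‖ ^ 2 ≤ ‖S‖ * ‖y‖ * ‖T y‖ :=
    calc ‖T y‖ ^ 2 = ‖⟪S (T y), y⟫‖ := by rw [norm_sq_eq A, h]
      _ ≤ ‖S (T y)‖ * ‖y‖ := norm_inner_le F
      _ ≤ ‖S‖ * ‖T y‖ * ‖y‖ := by gcongr; exact S.le_opNorm _
      _ = ‖S‖ * ‖y‖ * ‖T y‖ := by ring
  nlinarith [mul_nonneg (norm_nonneg S) (norm_nonneg y)]

theorem inner_self_adjoint_apply_le (S : E →L[ℂ] F) {T : F → E}
    (h : ∀ x y, ⟪S x, y⟫ = ⟪x, T y⟫) (y : F) : ⟪T y, T y⟫ ≤ ‖S‖ ^ 2 • ⟪y, y⟫ :=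
  inner_self_apply_le (adjoint_map_smul h) (norm_adjoint_apply_le h) y

end CStarModule

theorem star_LK_g_frame_comp_adjoint_general
    {𝓐 : Type*} [CStarAlgebra 𝓐] [PartialOrder 𝓐] [StarOrderedRing 𝓐]
    {I : Type*}
    {H : Type*} [NormedAddCommGroup H] [NormedSpace ℂ H] [SMul 𝓐 H]
    [CStarModule 𝓐 H]
    {Hi : I → Type*} [∀ i, NormedAddCommGroup (Hi i)] [∀ i, NormedSpace ℂ (Hi i)]
    [∀ i, SMul 𝓐 (Hi i)] [∀ i, CStarModule 𝓐 (Hi i)]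
    -- `K` and `L` are adjointable operators on `H` with adjoints `Kadj`, `Ladj`
    (Kadj L Ladj : H →L[ℂ] H)
    (hL : ∀ x y : H, (inner 𝓐 (L x) y : 𝓐) = inner 𝓐 x (Ladj y))
    -- the family `Λ i ∈ End*(H, Hi i)` of adjointable operators
    (Λ : ∀ i, H →L[ℂ] Hi i)
    -- `{Λ i}` is a `∗`-`K`-`g`-frame with bounds `a`, `b`
    (a b : 𝓐)
    (hsum : ∀ x : H, Summable fun i => (inner 𝓐 (Λ i x) (Λ i x) : 𝓐))
    (hlow : ∀ x : H,
      a * (inner 𝓐 (Kadj x) (Kadj x) : 𝓐) * star a ≤ ∑' i, (inner 𝓐 (Λ i x) (Λ i x) : 𝓐))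
    (hup : ∀ x : H, ∑' i, (inner 𝓐 (Λ i x) (Λ i x) : 𝓐) ≤ b * (inner 𝓐 x x : 𝓐) * star b) :
    -- `{Λ i ∘ L*}` is a `∗`-`(LK)`-`g`-frame with bounds `a` and `‖L‖·b`
    (∀ f : H, Summable fun i => (inner 𝓐 (Λ i (Ladj f)) (Λ i (Ladj f)) : 𝓐)) ∧
    ∀ f : H,
      a * (inner 𝓐 (Kadj (Ladj f)) (Kadj (Ladj f)) : 𝓐) * star a ≤
          ∑' i, (inner 𝓐 (Λ i (Ladj f)) (Λ i (Ladj f)) : 𝓐) ∧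
      ∑' i, (inner 𝓐 (Λ i (Ladj f)) (Λ i (Ladj f)) : 𝓐) ≤
          ‖L‖ ^ 2 • (b * (inner 𝓐 f f : 𝓐) * star b) := by
  refine ⟨fun f => hsum (Ladj f), fun f => ⟨hlow (Ladj f), ?_⟩⟩
  calc ∑' i, (inner 𝓐 (Λ i (Ladj f)) (Λ i (Ladj f)) : 𝓐)
      ≤ b * (inner 𝓐 (Ladj f) (Ladj f) : 𝓐) * star b := hup (Ladj f)
    _ ≤ b * (‖L‖ ^ 2 • (inner 𝓐 f f : 𝓐)) * star b :=
      star_right_conjugate_le_conjugate (CStarModule.inner_self_adjoint_apply_le L hL f) b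
    _ = ‖L‖ ^ 2 • (b * (inner 𝓐 f f : 𝓐) * star b) := by
      rw [mul_smul_comm, smul_mul_assoc]

/-- If `{Λ i}` is a `∗`-`K`-`g`-frame with bounds `a, b` and
`L ∈ End*(H)`, then `{Λ i ∘ L*}` is a `∗`-`(LK)`-`g`-frame with bounds `a` and `‖L‖·b`:
for every `f`, `a⟪(LK)*f,(LK)*f⟫a* ≤ ∑ᵢ ⟪Λᵢ L*f, Λᵢ L*f⟫ ≤ ‖L‖² • (b⟪f,f⟫b*)`. -/
theorem star_LK_g_frame_comp_adjoint
    {𝓐 : Type*} [CStarAlgebra 𝓐] [PartialOrder 𝓐] [StarOrderedRing 𝓐]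
    {I : Type*} [Countable I]
    {H : Type*} [NormedAddCommGroup H] [NormedSpace ℂ H] [SMul 𝓐 H]
    [CStarModule 𝓐 H] [CompleteSpace H]
    {Hi : I → Type*} [∀ i, NormedAddCommGroup (Hi i)] [∀ i, NormedSpace ℂ (Hi i)]
    [∀ i, SMul 𝓐 (Hi i)] [∀ i, CStarModule 𝓐 (Hi i)] [∀ i, CompleteSpace (Hi i)]
    -- `K` and `L` are adjointable operators on `H` with adjoints `Kadj`, `Ladj`
    (K Kadj L Ladj : H →L[ℂ] H)
    (hK : ∀ x y : H, (inner 𝓐 (K x) y : 𝓐) = inner 𝓐 x (Kadj y))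
    (hL : ∀ x y : H, (inner 𝓐 (L x) y : 𝓐) = inner 𝓐 x (Ladj y))
    -- the family `Λ i ∈ End*(H, Hi i)` of adjointable operators
    (Λ : ∀ i, H →L[ℂ] Hi i) (Λadj : ∀ i, Hi i →L[ℂ] H)
    (hΛ : ∀ i (x : H) (y : Hi i), (inner 𝓐 (Λ i x) y : 𝓐) = inner 𝓐 x (Λadj i y))
    -- `{Λ i}` is a `∗`-`K`-`g`-frame with bounds `a`, `b`
    (a b : 𝓐) (ha : a ≠ 0) (hb : b ≠ 0)
    (hsum : ∀ x : H, Summable fun i => (inner 𝓐 (Λ i x) (Λ i x) : 𝓐))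
    (hlow : ∀ x : H,
      a * (inner 𝓐 (Kadj x) (Kadj x) : 𝓐) * star a ≤ ∑' i, (inner 𝓐 (Λ i x) (Λ i x) : 𝓐))
    (hup : ∀ x : H, ∑' i, (inner 𝓐 (Λ i x) (Λ i x) : 𝓐) ≤ b * (inner 𝓐 x x : 𝓐) * star b) :
    -- `{Λ i ∘ L*}` is a `∗`-`(LK)`-`g`-frame with bounds `a` and `‖L‖·b`
    (∀ f : H, Summable fun i => (inner 𝓐 (Λ i (Ladj f)) (Λ i (Ladj f)) : 𝓐)) ∧
    ∀ f : H,
      a * (inner 𝓐 (Kadj (Ladj f)) (Kadj (Ladj f)) : 𝓐) * star a ≤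
          ∑' i, (inner 𝓐 (Λ i (Ladj f)) (Λ i (Ladj f)) : 𝓐) ∧
      ∑' i, (inner 𝓐 (Λ i (Ladj f)) (Λ i (Ladj f)) : 𝓐) ≤
          ‖L‖ ^ 2 • (b * (inner 𝓐 f f : 𝓐) * star b) :=
  star_LK_g_frame_comp_adjoint_general Kadj L Ladj hL Λ a b hsum hlow hup
end

section
/- Let K, L ∈ End*_𝒜(H) and let {Λᵢ}_{i∈I} be a ∗-K-g-frame for H with bounds A, B ∈ 𝒜. If Range(L) ⊆ Range(K) and K has closed range, then {Λᵢ}_{i∈I} is a ∗-L-g-frame for H: there exists λ > 0 such that λ·A⟨L*f, L*f⟩A* ≤ ∑_{i∈I}⟨Λᵢf, Λᵢf⟩ ≤ B⟨f, f⟩B* for all f ∈ H, i.e., {Λᵢ} is a ∗-L-g-frame with bounds √λ·A and B. -/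
open scoped RightActions

/-- The Hilbert C⋆-module class as it stood in Mathlib (December 2024): a right `A`-module
(action of `Aᵐᵒᵖ`) with an `A`-valued inner product, `A`-linear in the second variable
on the right. -/
class OldCStarModule (A E : Type*) [NonUnitalSemiring A] [StarRing A] [Module ℂ A]
    [AddCommGroup E] [Module ℂ E] [PartialOrder A] [SMul Aᵐᵒᵖ E] [Norm A] [Norm E]
    extends Inner A E where
  inner_add_right {x} {y} {z} : inner x (y + z) = inner x y + inner x z
  inner_self_nonneg {x} : 0 ≤ inner x x
  inner_self {x} : inner x x = 0 ↔ x = 0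
  inner_op_smul_right {a : A} {x y : E} : inner x (y <• a) = inner x y * a
  inner_smul_right_complex {z : ℂ} {x} {y} : inner x (z • y) = z • inner x y
  star_inner x y : star (inner x y) = inner y x
  norm_eq_sqrt_norm_inner_self x : ‖x‖ = √‖inner x x‖

/-!
By the open mapping theorem applied to `K` onto its closed range, every `L x` has a preimage
`K z = L x` with `‖z‖ ≤ C ‖x‖`. Then `⟪x, L*f⟫ = ⟪z, K*f⟫`, and the Cauchy–Schwarz inequality
`⟪w, z⟫⟪z, w⟫ ≤ ‖z‖² ⟪w, w⟫` turns this into `p e e p ≤ C² ‖e p e‖ q` for `x = L*f • e`,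
where `p = ⟪L*f, L*f⟫`, `q = ⟪K*f, K*f⟫` and `e` is any self-adjoint element. Choosing
`e = max(p, ε)^(-1/2)` by functional calculus makes `‖e p e‖ ≤ 1` and `p e e p` converge to `p`,
so `p ≤ C² q`; conjugating by the lower frame bound gives the `∗`-`L`-`g`-frame inequality.
-/

namespace CStarAlgebra

variable {A : Type*} [CStarAlgebra A] [PartialOrder A] [StarOrderedRing A]

lemma exists_isSelfAdjoint_norm_mul_mul_le_one_and_norm_sub_le {p : A} (hp : 0 ≤ p) {ε : ℝ}
    (hε : 0 < ε) : ∃ e : A, IsSelfAdjoint e ∧ ‖e * p * e‖ ≤ 1 ∧ ‖p - p * e * (e * p)‖ ≤ ε := by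
  have hm : ∀ t, 0 < max t ε := fun t => hε.trans_le (le_max_right t ε)
  -- `e = max(p, ε)^(-1/2)`
  obtain ⟨g, hg, hgg⟩ : ∃ g : ℝ → ℝ, Continuous g ∧ ∀ t, g t * g t = (max t ε)⁻¹ :=
    ⟨fun t => (√(max t ε))⁻¹, (Real.continuous_sqrt.comp (continuous_id.max continuous_const)).inv₀
      fun t => (Real.sqrt_pos.mpr (hm t)).ne', fun t => by
        rw [← mul_inv, Real.mul_self_sqrt (hm t).le]⟩
  have hpe : p * cfc g p = cfc (fun t => t * g t) p := by
    nth_rw 1 [← cfc_id' ℝ p]; exact (cfc_mul ..).symm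
  have hep : cfc g p * p = cfc (fun t => g t * t) p := by
    nth_rw 2 [← cfc_id' ℝ p]; exact (cfc_mul ..).symm
  have hratio : ∀ t ∈ spectrum ℝ p, 0 ≤ t / max t ε ∧ t / max t ε ≤ 1 := fun t ht =>
    ⟨div_nonneg (spectrum_nonneg_of_nonneg hp ht) (hm t).le,
      div_le_one_of_le₀ (le_max_left t ε) (hm t).le⟩
  refine ⟨cfc g p, cfc_predicate g p, ?_, ?_⟩
  · have hepe : cfc g p * p * cfc g p = cfc (fun t => t / max t ε) p := by
      rw [hep, ← cfc_mul ..]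
      congr 1; ext t
      rw [div_eq_mul_inv, ← hgg]; ring
    rw [hepe]
    refine norm_cfc_le zero_le_one fun t ht => ?_
    rw [Real.norm_of_nonneg (hratio t ht).1]
    exact (hratio t ht).2
  · have hsub : p - p * cfc g p * (cfc g p * p) = cfc (fun t => t - t * (t / max t ε)) p := by
      rw [hpe, hep, ← cfc_mul ..]
      nth_rw 1 [← cfc_id' ℝ p]
      rw [← cfc_sub ..]
      congr 1; ext t
      rw [div_eq_mul_inv, ← hgg]; ring
    rw [hsub]
    refine norm_cfc_le hε.le fun t ht => ?_
    obtain ⟨h0, h1⟩ := hratio t ht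
    have ht0 := spectrum_nonneg_of_nonneg hp ht
    rw [Real.norm_of_nonneg (by nlinarith)]
    rcases le_total t ε with h | h
    · nlinarith
    · rw [max_eq_left h, div_self (hε.trans_le h).ne', mul_one, sub_self]
      exact hε.le

lemma le_smul_of_forall_mul_le {p q : A} (hp : 0 ≤ p) (hq : 0 ≤ q) {c : ℝ} (hc : 0 ≤ c)
    (h : ∀ e : A, IsSelfAdjoint e → p * e * (e * p) ≤ (c * ‖e * p * e‖) • q) : p ≤ c • q := by
  have hclosure : p ∈ closure (Set.Iic (c • q)) := Metric.mem_closure_iff.2 fun ε hε => by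
    obtain ⟨e, he, hepe, hsub⟩ :=
      exists_isSelfAdjoint_norm_mul_mul_le_one_and_norm_sub_le hp (half_pos hε)
    refine ⟨p * e * (e * p), (h e he).trans ?_, ?_⟩
    · exact smul_le_smul_of_nonneg_right (mul_le_of_le_one_right hc hepe) hq
    · rw [dist_eq_norm]
      exact hsub.trans_lt (half_lt_self hε)
  exact isClosed_Iic.closure_subset hclosure

end CStarAlgebra

theorem ContinuousLinearMap.exists_preimage_norm_le_of_range_subset {𝕜 E F G : Type*}
    [NontriviallyNormedField 𝕜] [NormedAddCommGroup E] [NormedSpace 𝕜 E] [CompleteSpace E]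
    [NormedAddCommGroup F] [NormedSpace 𝕜 F] [CompleteSpace F]
    [NormedAddCommGroup G] [NormedSpace 𝕜 G]
    (K : E →L[𝕜] F) (L : G →L[𝕜] F) (hrange : Set.range L ⊆ Set.range K)
    (hclosed : IsClosed (Set.range K)) :
    ∃ C : ℝ, ∀ x, ∃ z, K z = L x ∧ ‖z‖ ≤ C * ‖x‖ := by
  have : CompleteSpace (LinearMap.range (K : E →ₗ[𝕜] F)) :=
    (LinearMap.coe_range (K : E →ₗ[𝕜] F) ▸ hclosed).completeSpace_coe
  obtain ⟨C, hC_pos, hC⟩ :=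
    K.rangeRestrict.exists_preimage_norm_le Set.rangeFactorization_surjective
  refine ⟨C * ‖L‖, fun x => ?_⟩
  obtain ⟨z, hz, hz_norm⟩ := hC ⟨L x, hrange ⟨x, rfl⟩⟩
  refine ⟨z, congrArg Subtype.val hz, hz_norm.trans ?_⟩
  rw [mul_assoc]
  exact mul_le_mul_of_nonneg_left (L.le_opNorm x) hC_pos.le

namespace OldCStarModule

variable {A E : Type*} [CStarAlgebra A] [PartialOrder A]
  [NormedAddCommGroup E] [NormedSpace ℂ E] [SMul Aᵐᵒᵖ E] [OldCStarModule A E]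

lemma inner_zero_right {x : E} : inner A x (0 : E) = 0 := by
  have h := OldCStarModule.inner_add_right (A := A) (x := x) (y := (0 : E)) (z := 0)
  rwa [add_zero, left_eq_add] at h

lemma inner_neg_right {x y : E} : inner A x (-y) = -inner A x y := by
  apply eq_neg_of_add_eq_zero_left
  rw [← OldCStarModule.inner_add_right, neg_add_cancel, inner_zero_right]

lemma inner_sub_right {x y z : E} : inner A x (y - z) = inner A x y - inner A x z := by
  rw [sub_eq_add_neg, OldCStarModule.inner_add_right, inner_neg_right, ← sub_eq_add_neg]

lemma inner_sub_left {x y z : E} : inner A (x - y) z = inner A x z - inner A y z := by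
  rw [← star_inner z, inner_sub_right, star_sub, star_inner, star_inner]

lemma inner_op_smul_left {a : A} {x y : E} : inner A (x <• a) y = star a * inner A x y := by
  rw [← star_inner y, OldCStarModule.inner_op_smul_right, star_mul, star_inner]

lemma inner_real_smul_right {r : ℝ} {x y : E} : inner A x ((r : ℂ) • y) = r • inner A x y := by
  rw [inner_smul_right_complex, Complex.coe_smul]

lemma inner_real_smul_left {r : ℝ} {x y : E} : inner A ((r : ℂ) • x) y = r • inner A x y := by
  rw [← star_inner y, inner_real_smul_right, star_smul, star_trivial, star_inner]

variable (A) in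
lemma norm_sq_eq_norm_inner_self (x : E) : ‖x‖ ^ 2 = ‖inner A x x‖ := by
  rw [norm_eq_sqrt_norm_inner_self (A := A) x, Real.sq_sqrt (norm_nonneg _)]

variable [StarOrderedRing A]

lemma inner_mul_inner_swap_le (x y : E) :
    inner A y x * inner A x y ≤ ‖x‖ ^ 2 • inner A y y := by
  rcases eq_or_ne x 0 with rfl | hx
  · rw [inner_zero_right, zero_mul]
    exact smul_nonneg (by positivity) inner_self_nonneg
  set r : ℝ := ‖x‖ ^ 2 with hr
  have hr_pos : 0 < r := by have := norm_pos_iff.mpr hx; positivity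
  set a : A := inner A x y
  have hstar_a : star a = inner A y x := star_inner x y
  set P : A := inner A y x * inner A x y
  have hexpand : inner A (x <• a - (r : ℂ) • y) (x <• a - (r : ℂ) • y)
      = star a * inner A x x * a - r • P - r • P + r • (r • inner A y y) := by
    rw [inner_sub_left, inner_sub_right, inner_sub_right, inner_op_smul_left,
      inner_op_smul_left, OldCStarModule.inner_op_smul_right, inner_real_smul_right,
      inner_real_smul_left, inner_real_smul_left, inner_real_smul_right,
      OldCStarModule.inner_op_smul_right, hstar_a, mul_assoc]
    simp only [mul_smul_comm, P, a]
    abel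
  have hconj : star a * inner A x x * a ≤ r • P := by
    calc star a * inner A x x * a ≤ ‖inner A x x‖ • (star a * a) :=
          CStarAlgebra.star_left_conjugate_le_norm_smul (.of_nonneg inner_self_nonneg)
      _ = r • P := by rw [hr, norm_sq_eq_norm_inner_self A, hstar_a]
  have h : r • P ≤ r • (r • inner A y y) := by
    rw [← sub_nonneg]
    calc (0 : A) ≤ star a * inner A x x * a - r • P - r • P + r • (r • inner A y y) :=
          hexpand ▸ inner_self_nonneg
      _ ≤ r • P - r • P - r • P + r • (r • inner A y y) := by gcongr
      _ = r • (r • inner A y y) - r • P := by abel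
  exact (smul_le_smul_iff_of_pos_left hr_pos).mp h

/-- Douglas' inequality `L L* ≤ C² K K*`, evaluated at `f`. -/
lemma inner_adjoint_le_smul_of_exists_preimage {H₁ H₂ : Type*}
    [NormedAddCommGroup H₁] [NormedSpace ℂ H₁] [SMul Aᵐᵒᵖ H₁] [OldCStarModule A H₁]
    [NormedAddCommGroup H₂] [NormedSpace ℂ H₂] [SMul Aᵐᵒᵖ H₂] [OldCStarModule A H₂]
    {K : H₁ → E} {Kadj : E → H₁} {L : H₂ → E} {Ladj : E → H₂}
    (hK : ∀ x y, inner A (K x) y = inner A x (Kadj y))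
    (hL : ∀ x y, inner A (L x) y = inner A x (Ladj y))
    {C : ℝ} (hC : ∀ x, ∃ z, K z = L x ∧ ‖z‖ ≤ C * ‖x‖) (f : E) :
    inner A (Ladj f) (Ladj f) ≤ C ^ 2 • inner A (Kadj f) (Kadj f) := by
  set u := Ladj f
  set w := Kadj f
  have hq : (0 : A) ≤ inner A w w := inner_self_nonneg
  refine CStarAlgebra.le_smul_of_forall_mul_le inner_self_nonneg hq (sq_nonneg C) fun e he => ?_
  obtain ⟨z, hKz, hz⟩ := hC (u <• e)
  have hzw : inner A z w = e * inner A u u := by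
    rw [← hK, hKz, hL, inner_op_smul_left, he.star_eq]
  have hwz : inner A w z = inner A u u * e := by
    rw [← star_inner, hzw, star_mul, he.star_eq, (IsSelfAdjoint.of_nonneg inner_self_nonneg).star_eq]
  have hnorm : ‖u <• e‖ ^ 2 = ‖e * inner A u u * e‖ := by
    rw [norm_sq_eq_norm_inner_self A, OldCStarModule.inner_op_smul_right, inner_op_smul_left,
      he.star_eq]
  calc inner A u u * e * (e * inner A u u) = inner A w z * inner A z w := by
        rw [hwz, hzw, mul_assoc]
    _ ≤ ‖z‖ ^ 2 • inner A w w := inner_mul_inner_swap_le z w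
    _ ≤ (C ^ 2 * ‖e * inner A u u * e‖) • inner A w w := by
        refine smul_le_smul_of_nonneg_right ?_ hq
        rw [← hnorm, ← mul_pow]
        exact pow_le_pow_left₀ (norm_nonneg z) hz 2

end OldCStarModule

theorem star_L_g_frame_of_range_subset_general
    {𝓐 : Type*} [CStarAlgebra 𝓐] [PartialOrder 𝓐] [StarOrderedRing 𝓐]
    {I : Type*}
    {H : Type*} [NormedAddCommGroup H] [NormedSpace ℂ H] [SMul 𝓐ᵐᵒᵖ H]
    [OldCStarModule 𝓐 H] [CompleteSpace H]
    {Hi : I → Type*} [∀ i, NormedAddCommGroup (Hi i)] [∀ i, NormedSpace ℂ (Hi i)]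
    [∀ i, SMul 𝓐ᵐᵒᵖ (Hi i)] [∀ i, OldCStarModule 𝓐 (Hi i)]
    -- `K` and `L` are adjointable operators on `H` with adjoints `Kadj`, `Ladj`
    (K Kadj L Ladj : H →L[ℂ] H)
    (hK : ∀ x y : H, (inner 𝓐 (K x) y : 𝓐) = inner 𝓐 x (Kadj y))
    (hL : ∀ x y : H, (inner 𝓐 (L x) y : 𝓐) = inner 𝓐 x (Ladj y))
    -- the family `Λ i ∈ End*(H, Hi i)` of adjointable operators
    (Λ : ∀ i, H →L[ℂ] Hi i)
    -- `{Λ i}` is a `∗`-`K`-`g`-frame with bounds `a`, `b`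
    (a b : 𝓐)
    (hlow : ∀ x : H,
      a * (inner 𝓐 (Kadj x) (Kadj x) : 𝓐) * star a ≤ ∑' i, (inner 𝓐 (Λ i x) (Λ i x) : 𝓐))
    (hup : ∀ x : H, ∑' i, (inner 𝓐 (Λ i x) (Λ i x) : 𝓐) ≤ b * (inner 𝓐 x x : 𝓐) * star b)
    -- `Range(L) ⊆ Range(K)` and `K` has closed range
    (hrange : Set.range L ⊆ Set.range K)
    (hKclosed : IsClosed (Set.range K)) :
    ∃ lam : ℝ, 0 < lam ∧ ∀ f : H,
      lam • (a * (inner 𝓐 (Ladj f) (Ladj f) : 𝓐) * star a) ≤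
          ∑' i, (inner 𝓐 (Λ i f) (Λ i f) : 𝓐) ∧
      ∑' i, (inner 𝓐 (Λ i f) (Λ i f) : 𝓐) ≤ b * (inner 𝓐 f f : 𝓐) * star b := by
  obtain ⟨C, hC⟩ := K.exists_preimage_norm_le_of_range_subset L hrange hKclosed
  -- `C` may vanish, hence `C ^ 2 + 1`
  have hlam : 0 < C ^ 2 + 1 := by positivity
  refine ⟨(C ^ 2 + 1)⁻¹, inv_pos.mpr hlam, fun f => ⟨?_, hup f⟩⟩
  have hLK : (C ^ 2 + 1)⁻¹ • inner 𝓐 (Ladj f) (Ladj f) ≤ inner 𝓐 (Kadj f) (Kadj f) := by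
    rw [inv_smul_le_iff_of_pos hlam]
    refine (OldCStarModule.inner_adjoint_le_smul_of_exists_preimage hK hL hC f).trans ?_
    exact smul_le_smul_of_nonneg_right (by linarith) OldCStarModule.inner_self_nonneg
  calc (C ^ 2 + 1)⁻¹ • (a * inner 𝓐 (Ladj f) (Ladj f) * star a)
        = a * ((C ^ 2 + 1)⁻¹ • inner 𝓐 (Ladj f) (Ladj f)) * star a := by
          rw [← smul_mul_assoc, ← mul_smul_comm]
    _ ≤ a * inner 𝓐 (Kadj f) (Kadj f) * star a := star_right_conjugate_le_conjugate hLK a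
    _ ≤ ∑' i, inner 𝓐 (Λ i f) (Λ i f) := hlow f

/-- If `{Λ i}` is a `∗`-`K`-`g`-frame with bounds `a, b`,
`Range(L) ⊆ Range(K)` and `K` has closed range, then `{Λ i}` is a `∗`-`L`-`g`-frame:
there is `λ > 0` with `λ • (a⟪L*f,L*f⟫a*) ≤ ∑ᵢ ⟪Λᵢf,Λᵢf⟫ ≤ b⟪f,f⟫b*` for all `f`. -/
theorem star_L_g_frame_of_range_subset
    {𝓐 : Type*} [CStarAlgebra 𝓐] [PartialOrder 𝓐] [StarOrderedRing 𝓐]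
    {I : Type*} [Countable I]
    {H : Type*} [NormedAddCommGroup H] [NormedSpace ℂ H] [SMul 𝓐ᵐᵒᵖ H]
    [OldCStarModule 𝓐 H] [CompleteSpace H]
    {Hi : I → Type*} [∀ i, NormedAddCommGroup (Hi i)] [∀ i, NormedSpace ℂ (Hi i)]
    [∀ i, SMul 𝓐ᵐᵒᵖ (Hi i)] [∀ i, OldCStarModule 𝓐 (Hi i)] [∀ i, CompleteSpace (Hi i)]
    -- `K` and `L` are adjointable operators on `H` with adjoints `Kadj`, `Ladj`
    (K Kadj L Ladj : H →L[ℂ] H)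
    (hK : ∀ x y : H, (inner 𝓐 (K x) y : 𝓐) = inner 𝓐 x (Kadj y))
    (hL : ∀ x y : H, (inner 𝓐 (L x) y : 𝓐) = inner 𝓐 x (Ladj y))
    -- the family `Λ i ∈ End*(H, Hi i)` of adjointable operators
    (Λ : ∀ i, H →L[ℂ] Hi i) (Λadj : ∀ i, Hi i →L[ℂ] H)
    (hΛ : ∀ i (x : H) (y : Hi i), (inner 𝓐 (Λ i x) y : 𝓐) = inner 𝓐 x (Λadj i y))
    -- `{Λ i}` is a `∗`-`K`-`g`-frame with bounds `a`, `b`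
    (a b : 𝓐) (ha : a ≠ 0) (hb : b ≠ 0)
    (hsum : ∀ x : H, Summable fun i => (inner 𝓐 (Λ i x) (Λ i x) : 𝓐))
    (hlow : ∀ x : H,
      a * (inner 𝓐 (Kadj x) (Kadj x) : 𝓐) * star a ≤ ∑' i, (inner 𝓐 (Λ i x) (Λ i x) : 𝓐))
    (hup : ∀ x : H, ∑' i, (inner 𝓐 (Λ i x) (Λ i x) : 𝓐) ≤ b * (inner 𝓐 x x : 𝓐) * star b)
    -- `Range(L) ⊆ Range(K)` and `K` has closed range
    (hrange : Set.range L ⊆ Set.range K)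
    (hKclosed : IsClosed (Set.range K)) :
    ∃ lam : ℝ, 0 < lam ∧ ∀ f : H,
      lam • (a * (inner 𝓐 (Ladj f) (Ladj f) : 𝓐) * star a) ≤
          ∑' i, (inner 𝓐 (Λ i f) (Λ i f) : 𝓐) ∧
      ∑' i, (inner 𝓐 (Λ i f) (Λ i f) : 𝓐) ≤ b * (inner 𝓐 f f : 𝓐) * star b :=
  star_L_g_frame_of_range_subset_general K Kadj L Ladj hK hL Λ a b hlow hup hrange hKclosed
end

section
/- Let K ∈ End*_𝒜(H), let {Λᵢ}_{i∈I} be a ∗-K-g-frame for H with bounds A, B ∈ 𝒜, and let {Γᵢ ∈ End*_𝒜(H,Hᵢ)}_{i∈I} be a family of adjointable operators such that ∑_{i∈I}⟨Γᵢf, Γᵢf⟩ converges in norm for every f ∈ H. Suppose there is a constant M > 0 such that ‖∑_{i∈I}⟨(Λᵢ−Γᵢ)f, (Λᵢ−Γᵢ)f⟩‖ ≤ M·min(‖∑_{i∈I}⟨Λᵢf, Λᵢf⟩‖, ‖∑_{i∈I}⟨Γᵢf, Γᵢf⟩‖) for all f ∈ H. Then for every f ∈ H: (i) ‖∑_{i∈I}⟨Γᵢf,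 Γᵢf⟩‖^{1/2} ≤ (1+√M)·‖∑_{i∈I}⟨Λᵢf, Λᵢf⟩‖^{1/2} ≤ (1+√M)·‖B‖·‖f‖, and (ii) ‖A⟨K*f, K*f⟩A*‖ ≤ ‖∑_{i∈I}⟨Λᵢf, Λᵢf⟩‖ ≤ (1+√M)²·‖∑_{i∈I}⟨Γᵢf, Γᵢf⟩‖. -/
/-!
The map `v ↦ √‖∑' i, ⟪v i, v i⟫‖` on families satisfies Minkowski's inequality: the termwise
bound `⟪x + y, x + y⟫ ≤ (1 + s) • ⟪x, x⟫ + (1 + s⁻¹) • ⟪y, y⟫`, whose defect is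
`s⁻¹ • ⟪s • x - y, s • x - y⟫ ≥ 0`, survives summation and taking norms, and optimising over
`s > 0` turns it into the triangle inequality. Applied to `Γ f = Λ f - (Λ f - Γ f)` and
`Λ f = Γ f + (Λ f - Γ f)`, with the perturbation condition bounding the difference term, it gives
the two comparisons between the sums; the other two bounds are the frame inequalities read through
monotonicity of the norm on positive elements.
-/

open scoped RightActions

/-- The Hilbert C⋆-module class with its older meaning (right `Aᵐᵒᵖ`-action, inner product
linear on the right: `⟪x, y <• a⟫ = ⟪x, y⟫ * a`). -/
class CStarModuleRight (A E : Type*) [NonUnitalSemiring A] [StarRing A]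
    [Module ℂ A] [AddCommGroup E] [Module ℂ E] [PartialOrder A] [SMul Aᵐᵒᵖ E] [Norm A] [Norm E]
    extends Inner A E where
  inner_add_right {x} {y} {z} : inner x (y + z) = inner x y + inner x z
  inner_self_nonneg {x} : 0 ≤ inner x x
  inner_self {x} : inner x x = 0 ↔ x = 0
  inner_op_smul_right {a : A} {x y : E} : inner x (y <• a) = inner x y * a
  inner_smul_right_complex {z : ℂ} {x} {y} : inner x (z • y) = z • inner x y
  star_inner x y : star (inner x y) = inner y x
  norm_eq_sqrt_norm_inner_self x : ‖x‖ = √‖inner x x‖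

lemma Real.sqrt_le_sqrt_add_sqrt_of_forall_le {r p q : ℝ} (hp : 0 ≤ p) (hq : 0 ≤ q)
    (h : ∀ s : ℝ, 0 < s → r ≤ (1 + s) * p + (1 + s⁻¹) * q) :
    √r ≤ √p + √q := by
  refine le_of_forall_pos_le_add fun ε hε => Real.sqrt_le_iff.2 ⟨by positivity, ?_⟩
  set x := √p
  set y := √q
  have hx : 0 ≤ x := Real.sqrt_nonneg p
  have hy : 0 ≤ y := Real.sqrt_nonneg q
  have hx2 : x ^ 2 = p := Real.sq_sqrt hp
  have hy2 : y ^ 2 = q := Real.sq_sqrt hq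
  -- `s = y / x` would be optimal; the `ε` avoids dividing by zero
  have hxε : 0 < x + ε := by positivity
  have hyε : 0 < y + ε := by positivity
  have hsp : (y + ε) / (x + ε) * p ≤ (y + ε) * x := by
    rw [← hx2, div_mul_eq_mul_div, div_le_iff₀ hxε]
    nlinarith [mul_nonneg hyε.le hx]
  have hsq : ((y + ε) / (x + ε))⁻¹ * q ≤ (x + ε) * y := by
    rw [← hy2, inv_div, div_mul_eq_mul_div, div_le_iff₀ hyε]
    nlinarith [mul_nonneg hxε.le hy]
  nlinarith [h _ (div_pos hyε hxε)]

lemma Real.sqrt_le_one_add_sqrt_mul_sqrt {p q d M : ℝ} (hM : 0 ≤ M)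
    (htri : √q ≤ √p + √d) (hd : d ≤ M * p) : √q ≤ (1 + √M) * √p := by
  have hsqrt_d : √d ≤ √M * √p := by
    rw [← Real.sqrt_mul hM]
    exact Real.sqrt_le_sqrt hd
  linarith

lemma norm_mul_mul_star_le {R : Type*} [NormedRing R] [StarRing R] [NormedStarGroup R] (b a : R) :
    ‖b * a * star b‖ ≤ ‖b‖ ^ 2 * ‖a‖ :=
  calc ‖b * a * star b‖ ≤ ‖b‖ * ‖a‖ * ‖star b‖ :=
        (norm_mul_le _ _).trans (by gcongr; exact norm_mul_le _ _)
    _ = ‖b‖ ^ 2 * ‖a‖ := by rw [norm_star]; ring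

namespace CStarModuleRight

variable {𝓐 : Type*} [CStarAlgebra 𝓐] [PartialOrder 𝓐]
    {E : Type*} [NormedAddCommGroup E] [NormedSpace ℂ E] [SMul 𝓐ᵐᵒᵖ E] [CStarModuleRight 𝓐 E]

lemma inner_add_left {x y z : E} : inner 𝓐 (x + y) z = inner 𝓐 x z + inner 𝓐 y z := by
  rw [← star_inner z (x + y), inner_add_right, star_add, star_inner, star_inner]

lemma inner_smul_right_real {r : ℝ} {x y : E} : inner 𝓐 x (r • y) = r • inner 𝓐 x y := by
  rw [← Complex.coe_smul, inner_smul_right_complex, Complex.coe_smul]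

lemma inner_smul_left_real {r : ℝ} {x y : E} : inner 𝓐 (r • x) y = r • inner 𝓐 x y := by
  rw [← star_inner y (r • x), inner_smul_right_real, star_smul, star_trivial, star_inner]

lemma inner_neg_right {x y : E} : inner 𝓐 x (-y) = -inner 𝓐 x y := by
  rw [← neg_one_smul ℝ y, inner_smul_right_real, neg_one_smul]

lemma inner_neg_left {x y : E} : inner 𝓐 (-x) y = -inner 𝓐 x y := by
  rw [← neg_one_smul ℝ x, inner_smul_left_real, neg_one_smul]

lemma inner_neg_neg {x y : E} : inner 𝓐 (-x) (-y) = inner 𝓐 x y := by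
  rw [inner_neg_left, inner_neg_right, neg_neg]

lemma norm_inner_self (x : E) : ‖inner 𝓐 x x‖ = ‖x‖ ^ 2 := by
  rw [norm_eq_sqrt_norm_inner_self (A := 𝓐) x, Real.sq_sqrt (norm_nonneg _)]

section Order

variable [StarOrderedRing 𝓐]

lemma inner_self_add_le (x y : E) {s : ℝ} (hs : 0 < s) :
    inner 𝓐 (x + y) (x + y) ≤ (1 + s) • inner 𝓐 x x + (1 + s⁻¹) • inner 𝓐 y y := by
  rw [← sub_nonneg]
  convert smul_nonneg (inv_nonneg.2 hs.le) (inner_self_nonneg (A := 𝓐) (x := s • x + -y)) using 1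
  simp only [inner_add_left, inner_add_right, inner_neg_left, inner_neg_right,
    inner_smul_left_real, inner_smul_right_real]
  match_scalars <;> field_simp <;> ring

variable {I : Type*} {Hi : I → Type*} [∀ i, NormedAddCommGroup (Hi i)] [∀ i, NormedSpace ℂ (Hi i)]
    [∀ i, SMul 𝓐ᵐᵒᵖ (Hi i)] [∀ i, CStarModuleRight 𝓐 (Hi i)]

lemma sqrt_norm_tsum_inner_add_le (x y : ∀ i, Hi i)
    (hx : Summable fun i => (inner 𝓐 (x i) (x i) : 𝓐))
    (hy : Summable fun i => (inner 𝓐 (y i) (y i) : 𝓐)) :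
    √‖∑' i, (inner 𝓐 (x i + y i) (x i + y i) : 𝓐)‖ ≤
      √‖∑' i, (inner 𝓐 (x i) (x i) : 𝓐)‖ + √‖∑' i, (inner 𝓐 (y i) (y i) : 𝓐)‖ := by
  by_cases hxy : Summable fun i => (inner 𝓐 (x i + y i) (x i + y i) : 𝓐)
  swap
  · rw [tsum_eq_zero_of_not_summable hxy, norm_zero, Real.sqrt_zero]
    positivity
  refine Real.sqrt_le_sqrt_add_sqrt_of_forall_le (norm_nonneg _) (norm_nonneg _) fun s hs => ?_
  have hle : ∑' i, (inner 𝓐 (x i + y i) (x i + y i) : 𝓐) ≤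
      (1 + s) • ∑' i, (inner 𝓐 (x i) (x i) : 𝓐) + (1 + s⁻¹) • ∑' i, (inner 𝓐 (y i) (y i) : 𝓐) := by
    rw [← hx.tsum_const_smul, ← hy.tsum_const_smul,
      ← (hx.const_smul _).tsum_add (hy.const_smul _)]
    exact hxy.tsum_le_tsum (fun i => inner_self_add_le _ _ hs)
      ((hx.const_smul _).add (hy.const_smul _))
  refine (CStarAlgebra.norm_le_norm_of_nonneg_of_le (tsum_nonneg fun _ => inner_self_nonneg)
    hle).trans ((norm_add_le _ _).trans_eq ?_)
  rw [norm_smul, norm_smul, Real.norm_of_nonneg (by positivity),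
    Real.norm_of_nonneg (by positivity)]

lemma sqrt_norm_tsum_inner_sub_le (x y : ∀ i, Hi i)
    (hx : Summable fun i => (inner 𝓐 (x i) (x i) : 𝓐))
    (hy : Summable fun i => (inner 𝓐 (y i) (y i) : 𝓐)) :
    √‖∑' i, (inner 𝓐 (x i - y i) (x i - y i) : 𝓐)‖ ≤
      √‖∑' i, (inner 𝓐 (x i) (x i) : 𝓐)‖ + √‖∑' i, (inner 𝓐 (y i) (y i) : 𝓐)‖ := by
  simpa only [← sub_eq_add_neg, inner_neg_neg] using
    sqrt_norm_tsum_inner_add_le x (fun i => -y i) hx (by simpa only [inner_neg_neg] using hy)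

end Order

end CStarModuleRight

theorem star_K_g_frame_perturbation_estimates_general
    {𝓐 : Type*} [CStarAlgebra 𝓐] [PartialOrder 𝓐] [StarOrderedRing 𝓐]
    {I : Type*}
    {H : Type*} [NormedAddCommGroup H] [NormedSpace ℂ H] [SMul 𝓐ᵐᵒᵖ H]
    [CStarModuleRight 𝓐 H]
    {Hi : I → Type*} [∀ i, NormedAddCommGroup (Hi i)] [∀ i, NormedSpace ℂ (Hi i)]
    [∀ i, SMul 𝓐ᵐᵒᵖ (Hi i)] [∀ i, CStarModuleRight 𝓐 (Hi i)]
    -- `K` is an adjointable operator on `H` with adjoint `Kadj`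
    (Kadj : H →L[ℂ] H)
    -- the family `Λ i ∈ End*(H, Hi i)` of adjointable operators
    (Λ : ∀ i, H →L[ℂ] Hi i)
    -- `{Λ i}` is a `∗`-`K`-`g`-frame with bounds `a`, `b`
    (a b : 𝓐)
    (hsum : ∀ x : H, Summable fun i => (inner 𝓐 (Λ i x) (Λ i x) : 𝓐))
    (hlow : ∀ x : H,
      a * (inner 𝓐 (Kadj x) (Kadj x) : 𝓐) * star a ≤ ∑' i, (inner 𝓐 (Λ i x) (Λ i x) : 𝓐))
    (hup : ∀ x : H, ∑' i, (inner 𝓐 (Λ i x) (Λ i x) : 𝓐) ≤ b * (inner 𝓐 x x : 𝓐) * star b)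
    -- the family `Γ i ∈ End*(H, Hi i)` of adjointable operators with convergent sums
    (Γ : ∀ i, H →L[ℂ] Hi i)
    (hsumΓ : ∀ x : H, Summable fun i => (inner 𝓐 (Γ i x) (Γ i x) : 𝓐))
    (hsumdiff : ∀ x : H, Summable fun i => (inner 𝓐 (Λ i x - Γ i x) (Λ i x - Γ i x) : 𝓐))
    -- the perturbation condition
    (M : ℝ) (hM : 0 < M)
    (hpert : ∀ f : H, ‖∑' i, (inner 𝓐 (Λ i f - Γ i f) (Λ i f - Γ i f) : 𝓐)‖ ≤
      M * min ‖∑' i, (inner 𝓐 (Λ i f) (Λ i f) : 𝓐)‖ ‖∑' i, (inner 𝓐 (Γ i f) (Γ i f) : 𝓐)‖) :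
    ∀ f : H,
      (Real.sqrt ‖∑' i, (inner 𝓐 (Γ i f) (Γ i f) : 𝓐)‖ ≤
          (1 + Real.sqrt M) * Real.sqrt ‖∑' i, (inner 𝓐 (Λ i f) (Λ i f) : 𝓐)‖ ∧
        (1 + Real.sqrt M) * Real.sqrt ‖∑' i, (inner 𝓐 (Λ i f) (Λ i f) : 𝓐)‖ ≤
          (1 + Real.sqrt M) * (‖b‖ * ‖f‖)) ∧
      (‖a * (inner 𝓐 (Kadj f) (Kadj f) : 𝓐) * star a‖ ≤
          ‖∑' i, (inner 𝓐 (Λ i f) (Λ i f) : 𝓐)‖ ∧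
        ‖∑' i, (inner 𝓐 (Λ i f) (Λ i f) : 𝓐)‖ ≤
          (1 + Real.sqrt M) ^ 2 * ‖∑' i, (inner 𝓐 (Γ i f) (Γ i f) : 𝓐)‖) := by
  intro f
  set SΛ := ∑' i, (inner 𝓐 (Λ i f) (Λ i f) : 𝓐)
  set SΓ := ∑' i, (inner 𝓐 (Γ i f) (Γ i f) : 𝓐)
  have hΓ_tri : √‖SΓ‖ ≤ √‖SΛ‖ + √‖∑' i, (inner 𝓐 (Λ i f - Γ i f) (Λ i f - Γ i f) : 𝓐)‖ := by
    simpa only [sub_sub_cancel] using CStarModuleRight.sqrt_norm_tsum_inner_sub_le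
      (fun i => Λ i f) (fun i => Λ i f - Γ i f) (hsum f) (hsumdiff f)
  have hΛ_tri : √‖SΛ‖ ≤ √‖SΓ‖ + √‖∑' i, (inner 𝓐 (Λ i f - Γ i f) (Λ i f - Γ i f) : 𝓐)‖ := by
    simpa only [add_sub_cancel] using CStarModuleRight.sqrt_norm_tsum_inner_add_le
      (fun i => Γ i f) (fun i => Λ i f - Γ i f) (hsumΓ f) (hsumdiff f)
  have hΓ_le : √‖SΓ‖ ≤ (1 + √M) * √‖SΛ‖ := Real.sqrt_le_one_add_sqrt_mul_sqrt hM.le hΓ_tri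
    ((hpert f).trans (mul_le_mul_of_nonneg_left (min_le_left _ _) hM.le))
  have hΛ_le : √‖SΛ‖ ≤ (1 + √M) * √‖SΓ‖ := Real.sqrt_le_one_add_sqrt_mul_sqrt hM.le hΛ_tri
    ((hpert f).trans (mul_le_mul_of_nonneg_left (min_le_right _ _) hM.le))
  have hSΛ_le : √‖SΛ‖ ≤ ‖b‖ * ‖f‖ := by
    refine Real.sqrt_le_iff.2 ⟨by positivity, ?_⟩
    calc ‖SΛ‖ ≤ ‖b * (inner 𝓐 f f : 𝓐) * star b‖ :=
          CStarAlgebra.norm_le_norm_of_nonneg_of_le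
            (tsum_nonneg fun _ => CStarModuleRight.inner_self_nonneg) (hup f)
      _ ≤ ‖b‖ ^ 2 * ‖(inner 𝓐 f f : 𝓐)‖ := norm_mul_mul_star_le _ _
      _ = (‖b‖ * ‖f‖) ^ 2 := by rw [CStarModuleRight.norm_inner_self, mul_pow]
  refine ⟨⟨hΓ_le, by gcongr⟩, ⟨CStarAlgebra.norm_le_norm_of_nonneg_of_le
    (star_right_conjugate_nonneg CStarModuleRight.inner_self_nonneg a) (hlow f), ?_⟩⟩
  have hΛ_sq := pow_le_pow_left₀ (Real.sqrt_nonneg _) hΛ_le 2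
  rwa [mul_pow, Real.sq_sqrt (norm_nonneg _), Real.sq_sqrt (norm_nonneg _)] at hΛ_sq

/-- Perturbation estimates: if `{Λ i}` is a `∗`-`K`-`g`-frame with bounds
`a, b`, `{Γ i}` is a family with convergent sums and
`‖∑ᵢ ⟪(Λᵢ−Γᵢ)f,(Λᵢ−Γᵢ)f⟫‖ ≤ M·min(‖∑ᵢ ⟪Λᵢf,Λᵢf⟫‖, ‖∑ᵢ ⟪Γᵢf,Γᵢf⟫‖)`, then for every `f`,
(i) `‖∑ᵢ⟪Γᵢf,Γᵢf⟫‖^½ ≤ (1+√M)·‖∑ᵢ⟪Λᵢf,Λᵢf⟫‖^½ ≤ (1+√M)·‖b‖·‖f‖` and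
(ii) `‖a⟪K*f,K*f⟫a*‖ ≤ ‖∑ᵢ⟪Λᵢf,Λᵢf⟫‖ ≤ (1+√M)²·‖∑ᵢ⟪Γᵢf,Γᵢf⟫‖`. -/
theorem star_K_g_frame_perturbation_estimates
    {𝓐 : Type*} [CStarAlgebra 𝓐] [PartialOrder 𝓐] [StarOrderedRing 𝓐]
    {I : Type*} [Countable I]
    {H : Type*} [NormedAddCommGroup H] [NormedSpace ℂ H] [SMul 𝓐ᵐᵒᵖ H]
    [CStarModuleRight 𝓐 H] [CompleteSpace H]
    {Hi : I → Type*} [∀ i, NormedAddCommGroup (Hi i)] [∀ i, NormedSpace ℂ (Hi i)]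
    [∀ i, SMul 𝓐ᵐᵒᵖ (Hi i)] [∀ i, CStarModuleRight 𝓐 (Hi i)] [∀ i, CompleteSpace (Hi i)]
    -- `K` is an adjointable operator on `H` with adjoint `Kadj`
    (K Kadj : H →L[ℂ] H)
    (hK : ∀ x y : H, (inner 𝓐 (K x) y : 𝓐) = inner 𝓐 x (Kadj y))
    -- the family `Λ i ∈ End*(H, Hi i)` of adjointable operators
    (Λ : ∀ i, H →L[ℂ] Hi i) (Λadj : ∀ i, Hi i →L[ℂ] H)
    (hΛ : ∀ i (x : H) (y : Hi i), (inner 𝓐 (Λ i x) y : 𝓐) = inner 𝓐 x (Λadj i y))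
    -- `{Λ i}` is a `∗`-`K`-`g`-frame with bounds `a`, `b`
    (a b : 𝓐) (ha : a ≠ 0) (hb : b ≠ 0)
    (hsum : ∀ x : H, Summable fun i => (inner 𝓐 (Λ i x) (Λ i x) : 𝓐))
    (hlow : ∀ x : H,
      a * (inner 𝓐 (Kadj x) (Kadj x) : 𝓐) * star a ≤ ∑' i, (inner 𝓐 (Λ i x) (Λ i x) : 𝓐))
    (hup : ∀ x : H, ∑' i, (inner 𝓐 (Λ i x) (Λ i x) : 𝓐) ≤ b * (inner 𝓐 x x : 𝓐) * star b)
    -- the family `Γ i ∈ End*(H, Hi i)` of adjointable operators with convergent sums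
    (Γ : ∀ i, H →L[ℂ] Hi i) (Γadj : ∀ i, Hi i →L[ℂ] H)
    (hΓ : ∀ i (x : H) (y : Hi i), (inner 𝓐 (Γ i x) y : 𝓐) = inner 𝓐 x (Γadj i y))
    (hsumΓ : ∀ x : H, Summable fun i => (inner 𝓐 (Γ i x) (Γ i x) : 𝓐))
    (hsumdiff : ∀ x : H, Summable fun i => (inner 𝓐 (Λ i x - Γ i x) (Λ i x - Γ i x) : 𝓐))
    -- the perturbation condition
    (M : ℝ) (hM : 0 < M)
    (hpert : ∀ f : H, ‖∑' i, (inner 𝓐 (Λ i f - Γ i f) (Λ i f - Γ i f) : 𝓐)‖ ≤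
      M * min ‖∑' i, (inner 𝓐 (Λ i f) (Λ i f) : 𝓐)‖ ‖∑' i, (inner 𝓐 (Γ i f) (Γ i f) : 𝓐)‖) :
    ∀ f : H,
      (Real.sqrt ‖∑' i, (inner 𝓐 (Γ i f) (Γ i f) : 𝓐)‖ ≤
          (1 + Real.sqrt M) * Real.sqrt ‖∑' i, (inner 𝓐 (Λ i f) (Λ i f) : 𝓐)‖ ∧
        (1 + Real.sqrt M) * Real.sqrt ‖∑' i, (inner 𝓐 (Λ i f) (Λ i f) : 𝓐)‖ ≤
          (1 + Real.sqrt M) * (‖b‖ * ‖f‖)) ∧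
      (‖a * (inner 𝓐 (Kadj f) (Kadj f) : 𝓐) * star a‖ ≤
          ‖∑' i, (inner 𝓐 (Λ i f) (Λ i f) : 𝓐)‖ ∧
        ‖∑' i, (inner 𝓐 (Λ i f) (Λ i f) : 𝓐)‖ ≤
          (1 + Real.sqrt M) ^ 2 * ‖∑' i, (inner 𝓐 (Γ i f) (Γ i f) : 𝓐)‖) :=
  star_K_g_frame_perturbation_estimates_general Kadj Λ a b hsum hlow hup Γ hsumΓ hsumdiff M hM hpert
end

section
/- Let K, L ∈ End*_𝒜(H) where K is a co-isometry (KK* = id_H), Range(K) ⊆ Range(L), and Range(L) is closed. Let {Λᵢ}_{i∈I} be a ∗-K-g-frame for H with bounds A, B ∈ 𝒜 where A is invertible, and let {Γᵢ}_{i∈I} be a ∗-L-g-frame for H with bounds C, D ∈ 𝒜 where C is invertible. Then there exists a constant M > 0 such that for all f ∈ H: ‖∑_{i∈I}⟨(Λᵢ−Γᵢ)f, (Λᵢ−Γᵢ)f⟩‖ ≤ M·min(‖∑_{i∈I}⟨Λᵢf, Λᵢf⟩‖, ‖∑_{i∈I}⟨Γᵢf, Γᵢf⟩‖). -/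
open scoped RightActions

/-- The December 2024 Mathlib notion of a Hilbert C⋆-module (right `A`-action, inner product
`A`-linear in the second argument), kept with its old meaning. -/
class RightCStarModule (A E : Type*) [NonUnitalSemiring A] [StarRing A]
    [Module ℂ A] [AddCommGroup E] [Module ℂ E] [PartialOrder A] [SMul Aᵐᵒᵖ E] [Norm A] [Norm E]
    extends Inner A E where
  inner_add_right {x} {y} {z} : inner x (y + z) = inner x y + inner x z
  inner_self_nonneg {x} : 0 ≤ inner x x
  inner_self {x} : inner x x = 0 ↔ x = 0
  inner_op_smul_right {a : A} {x y : E} : inner x (y <• a) = inner x y * a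
  inner_smul_right_complex {z : ℂ} {x} {y} : inner x (z • y) = z • inner x y
  star_inner x y : star (inner x y) = inner y x
  norm_eq_sqrt_norm_inner_self x : ‖x‖ = √‖inner x x‖

/-!
Since `K K* = 1`, `K` is onto and `⟪K* f, K* f⟫ = ⟪f, f⟫`, so the lower `∗`-`K`-frame bound makes
`‖∑ ⟪Λᵢ f, Λᵢ f⟫‖` comparable with `‖f‖²`. Since `Range K ⊆ Range L`, `L` is onto as well; the open
mapping theorem and Cauchy–Schwarz then bound `‖f‖` by a multiple of `‖L* f‖`, and the lower
`∗`-`L`-frame bound makes `‖∑ ⟪Γᵢ f, Γᵢ f⟫‖` comparable with `‖f‖²` too. The two frame sums are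
therefore comparable, and the pointwise parallelogram inequality
`⟪x - y, x - y⟫ ≤ 2 (⟪x, x⟫ + ⟪y, y⟫)` bounds the sum for `Λ - Γ` by either of them.
-/

namespace CStarAlgebra

variable {A : Type*} [CStarAlgebra A] [PartialOrder A] [StarOrderedRing A]

lemma norm_le_norm_sq_mul_of_le_conj {x y : A} (b : A) (hx : 0 ≤ x) (h : x ≤ b * y * star b) :
    ‖x‖ ≤ ‖b‖ ^ 2 * ‖y‖ :=
  calc ‖x‖ ≤ ‖b * y * star b‖ := norm_le_norm_of_nonneg_of_le hx h
    _ ≤ ‖b‖ * ‖y‖ * ‖star b‖ := norm_mul₃_le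
    _ = ‖b‖ ^ 2 * ‖y‖ := by rw [norm_star]; ring

lemma norm_le_norm_inv_sq_mul_of_conj_le {x y : A} (u : Aˣ) (hx : 0 ≤ x)
    (h : u * x * star (u : A) ≤ y) : ‖x‖ ≤ ‖((u⁻¹ : Aˣ) : A)‖ ^ 2 * ‖y‖ := by
  refine norm_le_norm_sq_mul_of_le_conj _ hx ?_
  calc x = (u⁻¹ : Aˣ) * (u * x * star (u : A)) * star ((u⁻¹ : Aˣ) : A) := by
        simp only [← mul_assoc, Units.inv_mul, one_mul]
        simp only [mul_assoc, ← star_mul, Units.inv_mul, star_one, mul_one]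
    _ ≤ (u⁻¹ : Aˣ) * y * star ((u⁻¹ : Aˣ) : A) := star_right_conjugate_le_conjugate h _

lemma summable_of_nonneg_of_le {ι : Type*} {f g : ι → A} (hf : ∀ i, 0 ≤ f i)
    (hfg : ∀ i, f i ≤ g i) (hg : Summable g) : Summable f := by
  rw [summable_iff_vanishing_norm] at hg ⊢
  intro ε hε
  obtain ⟨s, hs⟩ := hg ε hε
  exact ⟨s, fun t ht => (norm_le_norm_of_nonneg_of_le (Finset.sum_nonneg fun i _ => hf i)
    (Finset.sum_le_sum fun i _ => hfg i)).trans_lt (hs t ht)⟩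

end CStarAlgebra

namespace CStarModule

variable {A E : Type*} [NonUnitalRing A] [StarRing A] [Module ℂ A] [StarModule ℂ A]
  [PartialOrder A] [IsOrderedAddMonoid A] [AddCommGroup E] [Module ℂ E] [SMul A E] [Norm A]
  [Norm E] [CStarModule A E]

lemma inner_sub_self_le (x y : E) :
    inner A (x - y) (x - y) ≤ 2 • (inner A x x + inner A y y) := by
  rw [← sub_nonneg]
  have h : 2 • (inner A x x + inner A y y) - inner A (x - y) (x - y) = inner A (x + y) (x + y) := by
    simp only [inner_sub_left, inner_sub_right, inner_add_left, inner_add_right]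
    abel
  exact h ▸ inner_self_nonneg

end CStarModule

namespace RightCStarModule

variable {A : Type*} [CStarAlgebra A] [PartialOrder A]

section

variable {E : Type*} [NormedAddCommGroup E] [NormedSpace ℂ E] [SMul Aᵐᵒᵖ E]
  [RightCStarModule A E]

/-- A right Hilbert `A`-module is a Hilbert `Aᵐᵒᵖ`-module in Mathlib's sense, with inner product
`op ⟪x, y⟫`, so Mathlib's Cauchy–Schwarz inequality applies to it. -/
instance toCStarModuleMulOpposite : CStarModule Aᵐᵒᵖ E where
  inner x y := MulOpposite.op (inner A x y)
  inner_add_right := congrArg MulOpposite.op inner_add_right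
  inner_self_nonneg := MulOpposite.op_nonneg.mpr inner_self_nonneg
  inner_self := (MulOpposite.op_eq_zero_iff _).trans inner_self
  inner_op_smul_right := congrArg MulOpposite.op inner_op_smul_right
  inner_smul_right_complex := congrArg MulOpposite.op inner_smul_right_complex
  star_inner x y := congrArg MulOpposite.op (star_inner x y)
  norm_eq_sqrt_norm_inner_self x := norm_eq_sqrt_norm_inner_self (A := A) x

variable (A) in
lemma norm_sq_eq (x : E) : ‖x‖ ^ 2 = ‖inner A x x‖ := CStarModule.norm_sq_eq Aᵐᵒᵖ (x := x)

variable [StarOrderedRing A]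

variable (A) in
lemma norm_inner_le (x y : E) : ‖inner A x y‖ ≤ ‖x‖ * ‖y‖ := CStarModule.norm_inner_le (A := Aᵐᵒᵖ) E

lemma inner_sub_self_le (x y : E) :
    inner A (x - y) (x - y) ≤ 2 • (inner A x x + inner A y y) :=
  MulOpposite.op_le_op.mp (CStarModule.inner_sub_self_le (A := Aᵐᵒᵖ) x y)

lemma norm_le_mul_norm_of_le_conj_of_conj_le {S T : A} {x y : E} {δ : ℝ} (b : A) (u : Aˣ)
    (hS : 0 ≤ S) (hSx : S ≤ b * inner A x x * star b) (hxy : ‖x‖ ≤ δ * ‖y‖)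
    (hyT : u * inner A y y * star (u : A) ≤ T) :
    ‖S‖ ≤ ‖b‖ ^ 2 * δ ^ 2 * ‖((u⁻¹ : Aˣ) : A)‖ ^ 2 * ‖T‖ :=
  calc ‖S‖ ≤ ‖b‖ ^ 2 * ‖x‖ ^ 2 := by
        rw [norm_sq_eq A x]; exact CStarAlgebra.norm_le_norm_sq_mul_of_le_conj b hS hSx
    _ ≤ ‖b‖ ^ 2 * (δ ^ 2 * ‖y‖ ^ 2) := by rw [← mul_pow δ]; gcongr
    _ ≤ ‖b‖ ^ 2 * (δ ^ 2 * (‖((u⁻¹ : Aˣ) : A)‖ ^ 2 * ‖T‖)) := by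
        rw [norm_sq_eq A y]
        gcongr
        exact CStarAlgebra.norm_le_norm_inv_sq_mul_of_conj_le u inner_self_nonneg hyT
    _ = ‖b‖ ^ 2 * δ ^ 2 * ‖((u⁻¹ : Aˣ) : A)‖ ^ 2 * ‖T‖ := by ring

end

section

variable [StarOrderedRing A] {ι : Type*} {E : ι → Type*} [∀ i, NormedAddCommGroup (E i)]
  [∀ i, NormedSpace ℂ (E i)] [∀ i, SMul Aᵐᵒᵖ (E i)] [∀ i, RightCStarModule A (E i)] {x y : ∀ i, E i}

lemma summable_inner_self_sub (hx : Summable fun i => inner A (x i) (x i))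
    (hy : Summable fun i => inner A (y i) (y i)) :
    Summable fun i => inner A (x i - y i) (x i - y i) :=
  CStarAlgebra.summable_of_nonneg_of_le (fun _ => inner_self_nonneg)
    (fun i => inner_sub_self_le (x i) (y i)) ((hx.add hy).const_smul 2)

lemma norm_tsum_inner_self_sub_le (hx : Summable fun i => inner A (x i) (x i))
    (hy : Summable fun i => inner A (y i) (y i)) :
    ‖∑' i, inner A (x i - y i) (x i - y i)‖ ≤
      2 * ‖∑' i, inner A (x i) (x i)‖ + 2 * ‖∑' i, inner A (y i) (y i)‖ := by
  have hle : ∑' i, inner A (x i - y i) (x i - y i) ≤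
      2 • (∑' i, inner A (x i) (x i) + ∑' i, inner A (y i) (y i)) := by
    rw [← hx.tsum_add hy, ← (hx.add hy).tsum_const_smul]
    exact (summable_inner_self_sub hx hy).tsum_le_tsum (fun i => inner_sub_self_le (x i) (y i))
      ((hx.add hy).const_smul 2)
  calc ‖∑' i, inner A (x i - y i) (x i - y i)‖
      ≤ ‖2 • (∑' i, inner A (x i) (x i) + ∑' i, inner A (y i) (y i))‖ :=
        CStarAlgebra.norm_le_norm_of_nonneg_of_le (tsum_nonneg fun _ => inner_self_nonneg) hle
    _ ≤ 2 * (‖∑' i, inner A (x i) (x i)‖ + ‖∑' i, inner A (y i) (y i)‖) :=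
        (norm_nsmul_le ..).trans (by push_cast; gcongr; exact norm_add_le _ _)
    _ = 2 * ‖∑' i, inner A (x i) (x i)‖ + 2 * ‖∑' i, inner A (y i) (y i)‖ := mul_add ..

end

section

variable {E F : Type*} [NormedAddCommGroup E] [NormedSpace ℂ E] [SMul Aᵐᵒᵖ E]
  [RightCStarModule A E] [NormedAddCommGroup F] [NormedSpace ℂ F] [SMul Aᵐᵒᵖ F]
  [RightCStarModule A F]

lemma inner_adjoint_self_of_comp_eq_id {K : E →L[ℂ] F} {Kadj : F →L[ℂ] E}
    (hK : ∀ x y, inner A (K x) y = inner A x (Kadj y))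
    (hKco : K.comp Kadj = ContinuousLinearMap.id ℂ F) (y : F) :
    inner A (Kadj y) (Kadj y) = inner A y y := by
  rw [← hK, ← ContinuousLinearMap.comp_apply, hKco, ContinuousLinearMap.id_apply]

lemma exists_norm_le_mul_norm_adjoint_of_surjective [StarOrderedRing A] [CompleteSpace E]
    [CompleteSpace F] {L : E →L[ℂ] F}
    {Ladj : F →L[ℂ] E} (hL : ∀ x y, inner A (L x) y = inner A x (Ladj y))
    (hsurj : Function.Surjective L) : ∃ δ : ℝ, ∀ y, ‖y‖ ≤ δ * ‖Ladj y‖ := by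
  obtain ⟨δ, hδ, hpre⟩ := L.exists_preimage_norm_le hsurj
  refine ⟨δ, fun y => ?_⟩
  obtain ⟨x, rfl, hx⟩ := hpre y
  have h : ‖L x‖ * ‖L x‖ ≤ (δ * ‖Ladj (L x)‖) * ‖L x‖ :=
    calc ‖L x‖ * ‖L x‖ = ‖inner A x (Ladj (L x))‖ := by rw [← sq, norm_sq_eq A, hL]
      _ ≤ ‖x‖ * ‖Ladj (L x)‖ := norm_inner_le A _ _
      _ ≤ (δ * ‖L x‖) * ‖Ladj (L x)‖ := by gcongr
      _ = (δ * ‖Ladj (L x)‖) * ‖L x‖ := by ring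
  rcases (norm_nonneg (L x)).eq_or_lt with h0 | h0
  · rw [← h0]; positivity
  · exact le_of_mul_le_mul_right h h0

end

end RightCStarModule

open RightCStarModule

theorem star_K_g_frame_perturbation_converse_general
    {𝓐 : Type*} [CStarAlgebra 𝓐] [PartialOrder 𝓐] [StarOrderedRing 𝓐]
    {I : Type*}
    {H : Type*} [NormedAddCommGroup H] [NormedSpace ℂ H] [SMul 𝓐ᵐᵒᵖ H]
    [RightCStarModule 𝓐 H] [CompleteSpace H]
    {Hi : I → Type*} [∀ i, NormedAddCommGroup (Hi i)] [∀ i, NormedSpace ℂ (Hi i)]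
    [∀ i, SMul 𝓐ᵐᵒᵖ (Hi i)] [∀ i, RightCStarModule 𝓐 (Hi i)]
    -- `K` and `L` are adjointable operators on `H` with adjoints `Kadj`, `Ladj`
    (K Kadj L Ladj : H →L[ℂ] H)
    (hK : ∀ x y : H, (inner 𝓐 (K x) y : 𝓐) = inner 𝓐 x (Kadj y))
    (hL : ∀ x y : H, (inner 𝓐 (L x) y : 𝓐) = inner 𝓐 x (Ladj y))
    -- `K` is a co-isometry, `Range(K) ⊆ Range(L)`, and `Range(L)` is closed
    (hKco : K.comp Kadj = ContinuousLinearMap.id ℂ H)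
    (hrange : Set.range K ⊆ Set.range L)
    -- the family `Λ i ∈ End*(H, Hi i)`: a `∗`-`K`-`g`-frame with bounds `a`, `b`,
    -- where `a` is invertible
    (Λ : ∀ i, H →L[ℂ] Hi i)
    (a b : 𝓐) (haU : IsUnit a)
    (hsum : ∀ x : H, Summable fun i => (inner 𝓐 (Λ i x) (Λ i x) : 𝓐))
    (hlow : ∀ x : H,
      a * (inner 𝓐 (Kadj x) (Kadj x) : 𝓐) * star a ≤ ∑' i, (inner 𝓐 (Λ i x) (Λ i x) : 𝓐))
    (hup : ∀ x : H, ∑' i, (inner 𝓐 (Λ i x) (Λ i x) : 𝓐) ≤ b * (inner 𝓐 x x : 𝓐) * star b)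
    -- the family `Γ i ∈ End*(H, Hi i)`: a `∗`-`L`-`g`-frame with bounds `c`, `d`,
    -- where `c` is invertible
    (Γ : ∀ i, H →L[ℂ] Hi i)
    (c d : 𝓐) (hcU : IsUnit c)
    (hsumΓ : ∀ x : H, Summable fun i => (inner 𝓐 (Γ i x) (Γ i x) : 𝓐))
    (hlowΓ : ∀ x : H,
      c * (inner 𝓐 (Ladj x) (Ladj x) : 𝓐) * star c ≤ ∑' i, (inner 𝓐 (Γ i x) (Γ i x) : 𝓐))
    (hupΓ : ∀ x : H, ∑' i, (inner 𝓐 (Γ i x) (Γ i x) : 𝓐) ≤ d * (inner 𝓐 x x : 𝓐) * star d) :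
    ∃ M : ℝ, 0 < M ∧ ∀ f : H,
      (Summable fun i => (inner 𝓐 (Λ i f - Γ i f) (Λ i f - Γ i f) : 𝓐)) ∧
      ‖∑' i, (inner 𝓐 (Λ i f - Γ i f) (Λ i f - Γ i f) : 𝓐)‖ ≤
        M * min ‖∑' i, (inner 𝓐 (Λ i f) (Λ i f) : 𝓐)‖ ‖∑' i, (inner 𝓐 (Γ i f) (Γ i f) : 𝓐)‖ := by
  obtain ⟨u, rfl⟩ := haU
  obtain ⟨v, rfl⟩ := hcU
  have hLsurj : Function.Surjective L := fun f =>
    hrange ⟨Kadj f, by rw [← ContinuousLinearMap.comp_apply, hKco, ContinuousLinearMap.id_apply]⟩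
  obtain ⟨δ, hδ⟩ := exists_norm_le_mul_norm_adjoint_of_surjective hL hLsurj
  simp only [inner_adjoint_self_of_comp_eq_id hK hKco] at hlow
  obtain ⟨C₁, hC₁, hΓΛ⟩ : ∃ C ≥ 0, ∀ f : H, ‖∑' i, (inner 𝓐 (Γ i f) (Γ i f) : 𝓐)‖ ≤
      C * ‖∑' i, (inner 𝓐 (Λ i f) (Λ i f) : 𝓐)‖ :=
    ⟨_, by positivity, fun f => norm_le_mul_norm_of_le_conj_of_conj_le d u
      (tsum_nonneg fun _ => inner_self_nonneg) (hupΓ f) (one_mul _).ge (hlow f)⟩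
  obtain ⟨C₂, hC₂, hΛΓ⟩ : ∃ C ≥ 0, ∀ f : H, ‖∑' i, (inner 𝓐 (Λ i f) (Λ i f) : 𝓐)‖ ≤
      C * ‖∑' i, (inner 𝓐 (Γ i f) (Γ i f) : 𝓐)‖ :=
    ⟨_, by positivity, fun f => norm_le_mul_norm_of_le_conj_of_conj_le b v
      (tsum_nonneg fun _ => inner_self_nonneg) (hup f) (hδ f) (hlowΓ f)⟩
  refine ⟨2 + 2 * C₁ + 2 * C₂, by positivity,
    fun f => ⟨summable_inner_self_sub (hsum f) (hsumΓ f), ?_⟩⟩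
  have hdiff := norm_tsum_inner_self_sub_le (hsum f) (hsumΓ f)
  have hC₂Λ : 0 ≤ C₂ * ‖∑' i, (inner 𝓐 (Λ i f) (Λ i f) : 𝓐)‖ := by positivity
  have hC₁Γ : 0 ≤ C₁ * ‖∑' i, (inner 𝓐 (Γ i f) (Γ i f) : 𝓐)‖ := by positivity
  rw [mul_min_of_nonneg _ _ (by positivity)]
  exact le_min (by linarith [hΓΛ f]) (by linarith [hΛΓ f])

/-- Let `K` be a co-isometry (`K K* = id`), `Range(K) ⊆ Range(L)` with
`Range(L)` closed, `{Λ i}` a `∗`-`K`-`g`-frame with bounds `a, b` (`a` invertible), and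
`{Γ i}` a `∗`-`L`-`g`-frame with bounds `c, d` (`c` invertible). Then there is `M > 0` with
`‖∑ᵢ ⟪(Λᵢ−Γᵢ)f,(Λᵢ−Γᵢ)f⟫‖ ≤ M·min(‖∑ᵢ ⟪Λᵢf,Λᵢf⟫‖, ‖∑ᵢ ⟪Γᵢf,Γᵢf⟫‖)` for all `f`. -/
theorem star_K_g_frame_perturbation_converse
    {𝓐 : Type*} [CStarAlgebra 𝓐] [PartialOrder 𝓐] [StarOrderedRing 𝓐]
    {I : Type*} [Countable I]
    {H : Type*} [NormedAddCommGroup H] [NormedSpace ℂ H] [SMul 𝓐ᵐᵒᵖ H]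
    [RightCStarModule 𝓐 H] [CompleteSpace H]
    {Hi : I → Type*} [∀ i, NormedAddCommGroup (Hi i)] [∀ i, NormedSpace ℂ (Hi i)]
    [∀ i, SMul 𝓐ᵐᵒᵖ (Hi i)] [∀ i, RightCStarModule 𝓐 (Hi i)] [∀ i, CompleteSpace (Hi i)]
    -- `K` and `L` are adjointable operators on `H` with adjoints `Kadj`, `Ladj`
    (K Kadj L Ladj : H →L[ℂ] H)
    (hK : ∀ x y : H, (inner 𝓐 (K x) y : 𝓐) = inner 𝓐 x (Kadj y))
    (hL : ∀ x y : H, (inner 𝓐 (L x) y : 𝓐) = inner 𝓐 x (Ladj y))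
    -- `K` is a co-isometry, `Range(K) ⊆ Range(L)`, and `Range(L)` is closed
    (hKco : K.comp Kadj = ContinuousLinearMap.id ℂ H)
    (hrange : Set.range K ⊆ Set.range L)
    (hLclosed : IsClosed (Set.range L))
    -- the family `Λ i ∈ End*(H, Hi i)`: a `∗`-`K`-`g`-frame with bounds `a`, `b`,
    -- where `a` is invertible
    (Λ : ∀ i, H →L[ℂ] Hi i) (Λadj : ∀ i, Hi i →L[ℂ] H)
    (hΛ : ∀ i (x : H) (y : Hi i), (inner 𝓐 (Λ i x) y : 𝓐) = inner 𝓐 x (Λadj i y))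
    (a b : 𝓐) (ha : a ≠ 0) (hb : b ≠ 0) (haU : IsUnit a)
    (hsum : ∀ x : H, Summable fun i => (inner 𝓐 (Λ i x) (Λ i x) : 𝓐))
    (hlow : ∀ x : H,
      a * (inner 𝓐 (Kadj x) (Kadj x) : 𝓐) * star a ≤ ∑' i, (inner 𝓐 (Λ i x) (Λ i x) : 𝓐))
    (hup : ∀ x : H, ∑' i, (inner 𝓐 (Λ i x) (Λ i x) : 𝓐) ≤ b * (inner 𝓐 x x : 𝓐) * star b)
    -- the family `Γ i ∈ End*(H, Hi i)`: a `∗`-`L`-`g`-frame with bounds `c`, `d`,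
    -- where `c` is invertible
    (Γ : ∀ i, H →L[ℂ] Hi i) (Γadj : ∀ i, Hi i →L[ℂ] H)
    (hΓ : ∀ i (x : H) (y : Hi i), (inner 𝓐 (Γ i x) y : 𝓐) = inner 𝓐 x (Γadj i y))
    (c d : 𝓐) (hc : c ≠ 0) (hd : d ≠ 0) (hcU : IsUnit c)
    (hsumΓ : ∀ x : H, Summable fun i => (inner 𝓐 (Γ i x) (Γ i x) : 𝓐))
    (hlowΓ : ∀ x : H,
      c * (inner 𝓐 (Ladj x) (Ladj x) : 𝓐) * star c ≤ ∑' i, (inner 𝓐 (Γ i x) (Γ i x) : 𝓐))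
    (hupΓ : ∀ x : H, ∑' i, (inner 𝓐 (Γ i x) (Γ i x) : 𝓐) ≤ d * (inner 𝓐 x x : 𝓐) * star d) :
    ∃ M : ℝ, 0 < M ∧ ∀ f : H,
      (Summable fun i => (inner 𝓐 (Λ i f - Γ i f) (Λ i f - Γ i f) : 𝓐)) ∧
      ‖∑' i, (inner 𝓐 (Λ i f - Γ i f) (Λ i f - Γ i f) : 𝓐)‖ ≤
        M * min ‖∑' i, (inner 𝓐 (Λ i f) (Λ i f) : 𝓐)‖ ‖∑' i, (inner 𝓐 (Γ i f) (Γ i f) : 𝓐)‖ :=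
  star_K_g_frame_perturbation_converse_general K Kadj L Ladj hK hL hKco hrange Λ a b haU hsum hlow
    hup Γ c d hcU hsumΓ hlowΓ hupΓ
end
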